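/- arXiv:math/0603430 — 8 statements merged into one kernel-verified Lean document; each statement's English description precedes it below -/
import Mathlib

section
/- Let d ≥ 1 be an integer, R > 0, and let K : [0,∞) → ℝ be a bounded, nonnegative, measurable function supported in [0,R]. Let m ≥ 0 be an integer and let f₁ : ℝ^d → ℝ be an integrable function that is continuously differentiable in a neighborhood of 0. Then, as p → 0⁺, ∫_{ℝ^d} ‖ω‖^m K(‖ω‖/p) f₁(ω) dω = p^{d+m} f₁(0) ∫_{ℝ^d} ‖ω‖^m K(‖ω‖) dω + O(p^{d+m+1}). -/
/-!
Substituting `ω = p • u` turns the integral into `p ^ (d + m) ∫ ‖u‖ ^ m K(‖u‖) f₁(p • u) du`.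
The weight `‖u‖ ^ m K(‖u‖)` is bounded and vanishes outside the ball of radius `R`, and on that
ball `f₁` is Lipschitz at scale `p`, so replacing `f₁(p • u)` by `f₁ 0` costs `O(p)`.
-/

open MeasureTheory Filter Topology Asymptotics Metric NNReal

section RadialWeight

variable {E : Type*} [NormedAddCommGroup E] {K : ℝ → ℝ} {M R : ℝ}

theorem norm_norm_pow_mul_comp_norm_le (hK : ∀ s, ‖K s‖ ≤ M) (hKsupp : ∀ s, R < s → K s = 0)
    (hR : 0 ≤ R) (m : ℕ) (u : E) : ‖‖u‖ ^ m * K ‖u‖‖ ≤ R ^ m * M := by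
  rcases le_or_gt ‖u‖ R with hu | hu
  · rw [norm_mul, norm_pow, norm_norm]
    exact mul_le_mul (pow_le_pow_left₀ (norm_nonneg u) hu m) (hK _) (norm_nonneg _)
      (pow_nonneg hR m)
  · rw [hKsupp _ hu, mul_zero, norm_zero]
    exact mul_nonneg (pow_nonneg hR m) ((norm_nonneg _).trans (hK 0))

theorem norm_pow_mul_comp_norm_eq_zero (hKsupp : ∀ s, R < s → K s = 0) (m : ℕ) :
    ∀ u ∉ closedBall (0 : E) R, ‖u‖ ^ m * K ‖u‖ = 0 := fun u hu => by
  rw [hKsupp _ (by simpa using hu), mul_zero]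

theorem integrable_norm_pow_mul_comp_norm [MeasurableSpace E] [BorelSpace E] [ProperSpace E]
    (μ : Measure E) [IsFiniteMeasureOnCompacts μ] (hKmeas : Measurable K)
    (hK : ∀ s, ‖K s‖ ≤ M) (hKsupp : ∀ s, R < s → K s = 0) (hR : 0 ≤ R) (m : ℕ) :
    Integrable (fun u : E => ‖u‖ ^ m * K ‖u‖) μ :=
  (Measure.integrableOn_of_bounded measure_closedBall_lt_top.ne
    ((measurable_norm.pow_const m).mul (hKmeas.comp measurable_norm)).aestronglyMeasurable
    (ae_of_all _ (norm_norm_pow_mul_comp_norm_le hK hKsupp hR m))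
    ).integrable_of_forall_notMem_eq_zero (norm_pow_mul_comp_norm_eq_zero hKsupp m)

end RadialWeight

section HaarRescaling

variable {E : Type*} [NormedAddCommGroup E] [NormedSpace ℝ E] [MeasurableSpace E] [BorelSpace E]
  [FiniteDimensional ℝ E] (μ : Measure E) [μ.IsAddHaarMeasure]

theorem integral_norm_pow_mul_comp_div_mul (K : ℝ → ℝ) (m : ℕ) (f : E → ℝ) {p : ℝ}
    (hp : 0 < p) :
    ∫ ω, ‖ω‖ ^ m * K (‖ω‖ / p) * f ω ∂μ
      = p ^ (Module.finrank ℝ E + m) * ∫ u, ‖u‖ ^ m * K ‖u‖ * f (p • u) ∂μ := by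
  have hscale : ∀ u : E, ‖p • u‖ ^ m * K (‖p • u‖ / p) * f (p • u)
      = p ^ m * (‖u‖ ^ m * K ‖u‖ * f (p • u)) := by
    intro u
    rw [norm_smul, Real.norm_of_nonneg hp.le, mul_div_cancel_left₀ _ hp.ne']
    ring
  have h := Measure.integral_comp_smul μ (fun ω => ‖ω‖ ^ m * K (‖ω‖ / p) * f ω) p
  simp only [hscale, integral_const_mul, smul_eq_mul, abs_inv, abs_pow, abs_of_pos hp] at h
  rw [pow_add, mul_assoc, h, mul_inv_cancel_left₀ (pow_ne_zero _ hp.ne')]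

theorem integral_norm_pow_mul_comp_div_mul_sub {K : ℝ → ℝ} {m : ℕ} {f : E → ℝ} {C : ℝ}
    (hA : Integrable (fun u => ‖u‖ ^ m * K ‖u‖) μ) (hA_bdd : ∀ u : E, ‖‖u‖ ^ m * K ‖u‖‖ ≤ C)
    (hf : Integrable f μ) {p : ℝ} (hp : 0 < p) :
    ∫ ω, ‖ω‖ ^ m * K (‖ω‖ / p) * f ω ∂μ
        - p ^ (Module.finrank ℝ E + m) * f 0 * ∫ u, ‖u‖ ^ m * K ‖u‖ ∂μ
      = p ^ (Module.finrank ℝ E + m) * ∫ u, ‖u‖ ^ m * K ‖u‖ * (f (p • u) - f 0) ∂μ := by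
  have hAf : Integrable (fun u => ‖u‖ ^ m * K ‖u‖ * f (p • u)) μ :=
    (hf.comp_smul hp.ne').bdd_mul hA.aestronglyMeasurable (ae_of_all _ hA_bdd)
  simp_rw [mul_sub]
  rw [integral_sub hAf (hA.mul_const _), integral_mul_const,
    integral_norm_pow_mul_comp_div_mul μ K m f hp]
  ring

end HaarRescaling

section LipschitzRemainder

variable {E F : Type*} [NormedAddCommGroup E] [NormedSpace ℝ E] [MeasurableSpace E]
  [ProperSpace E] [NormedAddCommGroup F] [NormedSpace ℝ F]
  (μ : Measure E) [IsFiniteMeasureOnCompacts μ]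

theorem isBigO_integral_smul_comp_smul_sub {g : E → ℝ} {C R : ℝ} (hg : ∀ u, ‖g u‖ ≤ C)
    (hg_supp : ∀ u ∉ closedBall (0 : E) R, g u = 0) {f : E → F} {L : ℝ≥0} {t : Set E}
    (ht : t ∈ 𝓝 0) (hf : LipschitzOnWith L f t) :
    (fun p : ℝ => ∫ u, g u • (f (p • u) - f 0) ∂μ) =O[𝓝 0] id := by
  obtain ⟨δ, hδ, hδt⟩ := Metric.mem_nhds_iff.1 ht
  have hsmall : ∀ᶠ p : ℝ in 𝓝 0, ‖p‖ * R < δ := by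
    have : Tendsto (fun p : ℝ => ‖p‖ * R) (𝓝 0) (𝓝 0) :=
      (by fun_prop : Continuous fun p : ℝ => ‖p‖ * R).tendsto' 0 0 (by simp)
    exact this (Iio_mem_nhds hδ)
  refine isBigO_iff.2 ⟨C * L * R * μ.real (closedBall 0 R), ?_⟩
  filter_upwards [hsmall] with p hp
  have hpoint : ∀ u ∈ closedBall (0 : E) R,
      ‖g u • (f (p • u) - f 0)‖ ≤ C * (L * (‖p‖ * R)) := by
    intro u hu
    have hpu : ‖p • u‖ ≤ ‖p‖ * R := by
      rw [norm_smul]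
      exact mul_le_mul_of_nonneg_left (mem_closedBall_zero_iff.1 hu) (norm_nonneg p)
    have hlip : ‖f (p • u) - f 0‖ ≤ L * (‖p‖ * R) := by
      have := hf.dist_le_mul _ (hδt (mem_ball_zero_iff.2 (hpu.trans_lt hp))) _
        (hδt (mem_ball_self hδ))
      rw [dist_eq_norm, dist_zero_right] at this
      exact this.trans (mul_le_mul_of_nonneg_left hpu L.coe_nonneg)
    rw [norm_smul]
    exact mul_le_mul (hg u) hlip (norm_nonneg _) ((norm_nonneg _).trans (hg u))
  rw [← setIntegral_eq_integral_of_forall_compl_eq_zero (s := closedBall 0 R)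
    fun u hu => by simp [hg_supp u hu]]
  calc _ ≤ C * (L * (‖p‖ * R)) * μ.real (closedBall 0 R) :=
        norm_setIntegral_le_of_norm_le_const measure_closedBall_lt_top hpoint
    _ = _ := by simp only [id]; ring

end LipschitzRemainder

theorem stmt_2_general (d : ℕ) (R : ℝ) (hR : 0 < R)
    (K : ℝ → ℝ) (hKmeas : Measurable K) (hKnonneg : ∀ s, 0 ≤ K s)
    (hKbdd : ∃ M, ∀ s, K s ≤ M)
    (hKsupp : ∀ s, R < s → K s = 0)
    (m : ℕ)
    (f₁ : EuclideanSpace ℝ (Fin d) → ℝ) (hf₁int : Integrable f₁)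
    (hf₁smooth : ∃ ε > 0,
      ContDiffOn ℝ 1 f₁ (Metric.ball (0 : EuclideanSpace ℝ (Fin d)) ε)) :
    (fun p : ℝ =>
        (∫ ω : EuclideanSpace ℝ (Fin d), ‖ω‖ ^ m * K (‖ω‖ / p) * f₁ ω)
          - p ^ (d + m) * f₁ 0 * ∫ ω : EuclideanSpace ℝ (Fin d), ‖ω‖ ^ m * K ‖ω‖)
      =O[𝓝[>] (0 : ℝ)] fun p => p ^ (d + m + 1) := by
  obtain ⟨M, hM⟩ := hKbdd
  have hK : ∀ s, ‖K s‖ ≤ M := fun s => (Real.norm_of_nonneg (hKnonneg s)).trans_le (hM s)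
  obtain ⟨ε, hε, hf₁⟩ := hf₁smooth
  obtain ⟨L, t, ht, hL⟩ := (hf₁.contDiffAt (ball_mem_nhds _ hε)).exists_lipschitzOnWith
  have hA_bdd := norm_norm_pow_mul_comp_norm_le (E := EuclideanSpace ℝ (Fin d)) hK hKsupp hR.le m
  have hA_int := integrable_norm_pow_mul_comp_norm (E := EuclideanSpace ℝ (Fin d)) volume hKmeas
    hK hKsupp hR.le m
  have hremainder := (isBigO_integral_smul_comp_smul_sub volume hA_bdd
    (norm_pow_mul_comp_norm_eq_zero hKsupp m) ht hL).mono
    (nhdsWithin_le_nhds (s := Set.Ioi 0))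
  refine ((isBigO_refl (fun p : ℝ => p ^ (d + m)) _).mul hremainder).congr' ?_ ?_
  · filter_upwards [self_mem_nhdsWithin] with p hp
    have hexpand := integral_norm_pow_mul_comp_div_mul_sub volume hA_int hA_bdd hf₁int hp
    rw [finrank_euclideanSpace_fin] at hexpand
    simp only [hexpand, smul_eq_mul]
  · exact .of_forall fun p => (pow_succ p _).symm

/-- Leading-order kernel integral expansion: for a bounded nonnegative kernel `K`
supported in `[0,R]` and a density `f₁` that is continuously differentiable near `0`,
`∫ ‖ω‖^m K(‖ω‖/p) f₁(ω) dω = p^(d+m) f₁(0) ∫ ‖ω‖^m K(‖ω‖) dω + O(p^(d+m+1))`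
as `p → 0⁺`. -/
theorem stmt_2 (d : ℕ) (hd : 1 ≤ d) (R : ℝ) (hR : 0 < R)
    (K : ℝ → ℝ) (hKmeas : Measurable K) (hKnonneg : ∀ s, 0 ≤ K s)
    (hKbdd : ∃ M, ∀ s, K s ≤ M)
    (hKsupp : ∀ s, R < s → K s = 0)
    (m : ℕ)
    (f₁ : EuclideanSpace ℝ (Fin d) → ℝ) (hf₁int : Integrable f₁)
    (hf₁smooth : ∃ ε > 0,
      ContDiffOn ℝ 1 f₁ (Metric.ball (0 : EuclideanSpace ℝ (Fin d)) ε)) :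
    (fun p : ℝ =>
        (∫ ω : EuclideanSpace ℝ (Fin d), ‖ω‖ ^ m * K (‖ω‖ / p) * f₁ ω)
          - p ^ (d + m) * f₁ 0 * ∫ ω : EuclideanSpace ℝ (Fin d), ‖ω‖ ^ m * K ‖ω‖)
      =O[𝓝[>] (0 : ℝ)] fun p => p ^ (d + m + 1) :=
  stmt_2_general d R hR K hKmeas hKnonneg hKbdd hKsupp m f₁ hf₁int hf₁smooth
end

section
/- Let d ≥ 1 be an integer, R > 0, and let K : [0,∞) → ℝ be a bounded, nonnegative, measurable function supported in [0,R]. For j ≥ 1 set m_{K,j} := ∫₀^R s^{j−1} K(s) ds and assume m_{K,d} > 0; define the kernel moment ratios B_p := m_{K,d+p}/m_{K,d}. Let f₁ : ℝ^d → ℝ be a nonnegative integrable function, continuously differentiable in a neighborhood of 0, with f₁(0) > 0. Then, as p → 0⁺, the weighted mean fourth-power distance (∫_{ℝ^d} ‖ω‖⁴ K(‖ω‖/p) f₁(ω) dω) / (∫_{ℝ^d} K(‖ω‖/p) f₁(ω) dω) equals B₄ p⁴ + O(p⁵). -/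
/-!
Substituting `ω = p • x` gives `∫ ‖ω‖ ^ j K (‖ω‖ / p) dω = p ^ (d + j) c_j`, and polar coordinates
identify `c_j = d |B₁| m_{K,d+j}`. The weight `K (‖ω‖ / p)` vanishes outside the ball of radius
`p R`, on which `f₁` is `L`-Lipschitz once `p` is small, so replacing `f₁ ω` by `f₁ 0` in the
weighted integral of `‖ω‖ ^ j` costs at most `L p ^ (d + j + 1) c_{j+1}`. Numerator and
denominator are therefore `p ^ d (f₁ 0 c₄ p ^ 4 + O(p ^ 5))` and `p ^ d (f₁ 0 c₀ + O(p))`, whose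
quotient is `(c₄ / c₀) p ^ 4 + O(p ^ 5) = B₄ p ^ 4 + O(p ^ 5)`.
-/

open MeasureTheory Filter Topology Asymptotics Set Metric Module
open scoped NNReal

theorem isBigO_div_sub_mul {α : Type*} {l : Filter α} {f g u w : α → ℝ} {a b : ℝ} (hb : b ≠ 0)
    (hf : (fun x => f x - a * u x) =O[l] fun x => u x * w x)
    (hg : (fun x => g x - b) =O[l] w) (hw : Tendsto w l (𝓝 0)) :
    (fun x => f x / g x - a / b * u x) =O[l] fun x => u x * w x := by
  have hg_lim : Tendsto g l (𝓝 b) := by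
    simpa using (hg.trans_tendsto hw).add_const b
  have hg_inv : (fun x => (g x)⁻¹) =O[l] fun _ => (1 : ℝ) := (hg_lim.inv₀ hb).isBigO_one ℝ
  have hsplit : (fun x => (f x - a * u x) * (g x)⁻¹ - a / b * (u x * (g x - b)) * (g x)⁻¹)
      =ᶠ[l] fun x => f x / g x - a / b * u x := by
    filter_upwards [hg_lim.eventually_ne hb] with x hx
    field_simp
    ring
  simpa using ((hf.mul hg_inv).sub
    ((((isBigO_refl u l).mul hg).const_mul_left (a / b)).mul hg_inv)).congr' hsplit
    EventuallyEq.rfl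

theorem abs_integral_mul_sub_le_of_lipschitzOnWith {α : Type*} [PseudoMetricSpace α]
    [MeasurableSpace α] {μ : Measure α} {w f : α → ℝ} {s : Set α} {L : ℝ≥0} {x₀ : α}
    (hf : LipschitzOnWith L f s) (hx₀ : x₀ ∈ s) (hw : ∀ x, 0 ≤ w x)
    (hws : ∀ x, w x ≠ 0 → x ∈ s) (hwf : Integrable (fun x => w x * f x) μ)
    (hwi : Integrable w μ) (hwd : Integrable (fun x => dist x x₀ * w x) μ) :
    |∫ x, w x * f x ∂μ - f x₀ * ∫ x, w x ∂μ| ≤ L * ∫ x, dist x x₀ * w x ∂μ := by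
  have hsub : ∫ x, w x * f x ∂μ - f x₀ * ∫ x, w x ∂μ = ∫ x, w x * (f x - f x₀) ∂μ := by
    simp_rw [mul_sub]
    rw [integral_sub hwf (hwi.mul_const _), integral_mul_const, mul_comm]
  have hbound : ∀ x, ‖w x * (f x - f x₀)‖ ≤ L * (dist x x₀ * w x) := by
    intro x
    rcases eq_or_ne (w x) 0 with hx | hx
    · simp [hx]
    · have hfx : |f x - f x₀| ≤ L * dist x x₀ := by
        simpa [Real.dist_eq] using hf.dist_le_mul x (hws x hx) x₀ hx₀
      calc ‖w x * (f x - f x₀)‖ = w x * |f x - f x₀| := by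
            rw [Real.norm_eq_abs, abs_mul, abs_of_nonneg (hw x)]
        _ ≤ w x * (L * dist x x₀) := mul_le_mul_of_nonneg_left hfx (hw x)
        _ = L * (dist x x₀ * w x) := by ring
  rw [hsub, ← Real.norm_eq_abs, ← integral_const_mul]
  exact norm_integral_le_of_norm_le (hwd.const_mul L) (ae_of_all _ hbound)

structure IsBoundedKernel (K : ℝ → ℝ) (R M : ℝ) : Prop where
  measurable : Measurable K
  nonneg : ∀ s, 0 ≤ K s
  le_bound : ∀ s, K s ≤ M
  eq_zero_of_lt : ∀ s, R < s → K s = 0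

noncomputable def kernelWeight {E : Type*} [Norm E] (K : ℝ → ℝ) (j : ℕ) (p : ℝ) (ω : E) : ℝ :=
  ‖ω‖ ^ j * K (‖ω‖ / p)

namespace IsBoundedKernel

variable {E : Type*} [NormedAddCommGroup E] {K : ℝ → ℝ} {R M p : ℝ}

theorem le_mul_of_apply_div_ne_zero (hK : IsBoundedKernel K R M) (hp : 0 < p) {r : ℝ}
    (hr : K (r / p) ≠ 0) : r ≤ p * R := by
  by_contra! h
  exact hr (hK.eq_zero_of_lt _ ((lt_div_iff₀ hp).2 (by linarith)))

theorem kernelWeight_nonneg (hK : IsBoundedKernel K R M) (j : ℕ) (p : ℝ) (ω : E) :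
    0 ≤ kernelWeight K j p ω :=
  mul_nonneg (by positivity) (hK.nonneg _)

theorem norm_kernelWeight_le (hK : IsBoundedKernel K R M) (hR : 0 ≤ R) (hp : 0 < p) (j : ℕ)
    (ω : E) : ‖kernelWeight K j p ω‖ ≤ (p * R) ^ j * M := by
  rw [Real.norm_of_nonneg (hK.kernelWeight_nonneg j p ω)]
  rcases eq_or_ne (K (‖ω‖ / p)) 0 with h | h
  · have hM : 0 ≤ M := (hK.nonneg 0).trans (hK.le_bound 0)
    simp only [kernelWeight, h, mul_zero]
    positivity
  · exact mul_le_mul (pow_le_pow_left₀ (norm_nonneg _) (hK.le_mul_of_apply_div_ne_zero hp h) j)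
      (hK.le_bound _) (hK.nonneg _) (by positivity)

theorem support_kernelWeight_subset (hK : IsBoundedKernel K R M) (hp : 0 < p) (j : ℕ) :
    Function.support (kernelWeight (E := E) K j p) ⊆ closedBall 0 (p * R) := fun _ hω =>
  mem_closedBall_zero_iff.2 (hK.le_mul_of_apply_div_ne_zero hp (right_ne_zero_of_mul hω))

variable [MeasurableSpace E] [OpensMeasurableSpace E] {μ : Measure E}

theorem measurable_kernelWeight (hK : IsBoundedKernel K R M) (j : ℕ) (p : ℝ) :
    Measurable (kernelWeight (E := E) K j p) :=
  (measurable_norm.pow_const j).mul (hK.measurable.comp (measurable_norm.div_const p))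

theorem integrable_kernelWeight [ProperSpace E] [IsFiniteMeasureOnCompacts μ]
    (hK : IsBoundedKernel K R M) (hR : 0 ≤ R) (hp : 0 < p) (j : ℕ) :
    Integrable (kernelWeight K j p) μ := by
  rw [← integrableOn_iff_integrable_of_support_subset (hK.support_kernelWeight_subset hp j)]
  exact Measure.integrableOn_of_bounded measure_closedBall_lt_top.ne
    (hK.measurable_kernelWeight j p).aestronglyMeasurable
    (ae_of_all _ (hK.norm_kernelWeight_le hR hp j))

theorem integrable_kernelWeight_mul (hK : IsBoundedKernel K R M) (hR : 0 ≤ R) (hp : 0 < p)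
    {f : E → ℝ} (hf : Integrable f μ) (j : ℕ) :
    Integrable (fun ω => kernelWeight K j p ω * f ω) μ :=
  hf.bdd_mul (hK.measurable_kernelWeight j p).aestronglyMeasurable
    (ae_of_all _ (hK.norm_kernelWeight_le hR hp j))

end IsBoundedKernel

section HaarMeasure

variable {E : Type*} [NormedAddCommGroup E] [NormedSpace ℝ E] [MeasurableSpace E] [BorelSpace E]
  [FiniteDimensional ℝ E] {μ : Measure E} [μ.IsAddHaarMeasure]

theorem integral_kernelWeight (K : ℝ → ℝ) (j : ℕ) {p : ℝ} (hp : 0 < p) :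
    ∫ ω, kernelWeight K j p ω ∂μ = p ^ (finrank ℝ E + j) * ∫ ω, ‖ω‖ ^ j * K ‖ω‖ ∂μ := by
  have hscale := Measure.integral_comp_smul μ (kernelWeight K j p) p
  have hcomp : ∀ ω : E, kernelWeight K j p (p • ω) = p ^ j * (‖ω‖ ^ j * K ‖ω‖) := fun ω => by
    rw [kernelWeight, norm_smul, Real.norm_of_nonneg hp.le, mul_div_cancel_left₀ _ hp.ne',
      mul_pow, mul_assoc]
  simp only [hcomp, integral_const_mul, smul_eq_mul,
    abs_of_pos (inv_pos.2 (pow_pos hp (finrank ℝ E)))] at hscale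
  rw [pow_add, mul_assoc, hscale, ← mul_assoc, mul_inv_cancel₀ (pow_pos hp _).ne', one_mul]

theorem integral_norm_pow_mul_eq_intervalIntegral [Nontrivial E] {K : ℝ → ℝ} {R : ℝ} (hR : 0 ≤ R)
    (hK : ∀ s, R < s → K s = 0) (j : ℕ) :
    ∫ ω, ‖ω‖ ^ j * K ‖ω‖ ∂μ
      = finrank ℝ E * μ.real (ball 0 1) * ∫ s in (0 : ℝ)..R, s ^ (finrank ℝ E + j - 1) * K s := by
  have hdim : finrank ℝ E + j - 1 = finrank ℝ E - 1 + j := by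
    have := finrank_pos (R := ℝ) (M := E); omega
  have hIoi : ∫ s in Ioi (0 : ℝ), s ^ (finrank ℝ E - 1) • (s ^ j * K s)
      = ∫ s in (0 : ℝ)..R, s ^ (finrank ℝ E + j - 1) * K s := by
    simp_rw [smul_eq_mul, hdim, pow_add, mul_assoc]
    rw [intervalIntegral.integral_of_le hR]
    refine setIntegral_eq_of_subset_of_forall_sdiff_eq_zero measurableSet_Ioi Ioc_subset_Ioi_self
      fun s ⟨hs0, hsR⟩ => ?_
    rw [hK s (lt_of_not_ge fun h => hsR ⟨hs0, h⟩), mul_zero, mul_zero]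
  rw [integral_fun_norm_addHaar μ (fun r => r ^ j * K r), hIoi, nsmul_eq_mul, smul_eq_mul,
    mul_assoc]

theorem IsBoundedKernel.isBigO_integral_kernelWeight_mul_sub {K : ℝ → ℝ} {R M : ℝ}
    (hK : IsBoundedKernel K R M) (hR : 0 < R) {f : E → ℝ} (hf : Integrable f μ) {L : ℝ≥0}
    {t : Set E} (ht : t ∈ 𝓝 0) (hLip : LipschitzOnWith L f t) (j : ℕ) :
    (fun p => (∫ ω, kernelWeight K j p ω * f ω ∂μ) / p ^ finrank ℝ E
        - f 0 * (∫ ω, ‖ω‖ ^ j * K ‖ω‖ ∂μ) * p ^ j) =O[𝓝[>] 0] fun p => p ^ j * p := by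
  obtain ⟨δ, hδ, hδt⟩ := Metric.mem_nhds_iff.1 ht
  refine IsBigO.of_bound (L * ∫ ω, ‖ω‖ ^ (j + 1) * K ‖ω‖ ∂μ) ?_
  filter_upwards [Ioo_mem_nhdsGT (div_pos hδ hR)] with p ⟨hp, hpδ⟩
  have hsupp : ∀ ω, kernelWeight K j p ω ≠ 0 → ω ∈ t := fun ω hω => hδt <| by
    have := hK.support_kernelWeight_subset hp j hω
    rw [mem_closedBall_zero_iff] at this
    rw [mem_ball_zero_iff]
    linarith [(lt_div_iff₀ hR).1 hpδ]
  have hdist : (fun ω : E => dist ω 0 * kernelWeight K j p ω) = kernelWeight K (j + 1) p := by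
    funext ω
    rw [dist_zero_right, kernelWeight, kernelWeight, pow_succ]
    ring
  have key := abs_integral_mul_sub_le_of_lipschitzOnWith hLip (mem_of_mem_nhds ht)
    (hK.kernelWeight_nonneg j p) hsupp (hK.integrable_kernelWeight_mul hR.le hp hf j)
    (hK.integrable_kernelWeight hR.le hp j)
    (hdist ▸ hK.integrable_kernelWeight hR.le hp (j + 1))
  rw [hdist, integral_kernelWeight K j hp, integral_kernelWeight K (j + 1) hp] at key
  have hpn : 0 < p ^ finrank ℝ E := pow_pos hp _
  calc ‖(∫ ω, kernelWeight K j p ω * f ω ∂μ) / p ^ finrank ℝ E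
        - f 0 * (∫ ω, ‖ω‖ ^ j * K ‖ω‖ ∂μ) * p ^ j‖
      = |((∫ ω, kernelWeight K j p ω * f ω ∂μ)
          - f 0 * (p ^ (finrank ℝ E + j) * ∫ ω, ‖ω‖ ^ j * K ‖ω‖ ∂μ)) / p ^ finrank ℝ E| := by
        rw [Real.norm_eq_abs, pow_add]
        congr 1
        field_simp
    _ = |(∫ ω, kernelWeight K j p ω * f ω ∂μ)
          - f 0 * (p ^ (finrank ℝ E + j) * ∫ ω, ‖ω‖ ^ j * K ‖ω‖ ∂μ)| / p ^ finrank ℝ E := by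
        rw [abs_div, abs_of_pos hpn]
    _ ≤ L * (p ^ (finrank ℝ E + (j + 1)) * ∫ ω, ‖ω‖ ^ (j + 1) * K ‖ω‖ ∂μ) / p ^ finrank ℝ E := by
        gcongr
    _ = L * (∫ ω, ‖ω‖ ^ (j + 1) * K ‖ω‖ ∂μ) * ‖p ^ j * p‖ := by
        rw [Real.norm_of_nonneg (by positivity), pow_add, pow_succ]
        field_simp

end HaarMeasure

theorem stmt_4_general (d : ℕ) (hd : 1 ≤ d) (R : ℝ) (hR : 0 < R)
    (K : ℝ → ℝ) (hKmeas : Measurable K) (hKnonneg : ∀ s, 0 ≤ K s)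
    (hKbdd : ∃ M, ∀ s, K s ≤ M)
    (hKsupp : ∀ s, R < s → K s = 0)
    (mK : ℕ → ℝ) (hmK : ∀ j, mK j = ∫ s in (0:ℝ)..R, s ^ (j - 1) * K s)
    (hmKd : 0 < mK d)
    (B : ℕ → ℝ) (hB : ∀ p, B p = mK (d + p) / mK d)
    (f₁ : EuclideanSpace ℝ (Fin d) → ℝ) (hf₁int : Integrable f₁)
    (hf₁pos : 0 < f₁ 0)
    (hf₁smooth : ∃ ε > 0,
      ContDiffOn ℝ 1 f₁ (Metric.ball (0 : EuclideanSpace ℝ (Fin d)) ε)) :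
    (fun p : ℝ =>
        (∫ ω : EuclideanSpace ℝ (Fin d), ‖ω‖ ^ 4 * K (‖ω‖ / p) * f₁ ω) /
          (∫ ω : EuclideanSpace ℝ (Fin d), K (‖ω‖ / p) * f₁ ω)
          - B 4 * p ^ 4)
      =O[𝓝[>] (0 : ℝ)] fun p => p ^ 5 := by
  obtain ⟨M, hM⟩ := hKbdd
  have hK : IsBoundedKernel K R M := ⟨hKmeas, hKnonneg, hM, hKsupp⟩
  obtain ⟨ε, hε, hf₁C1⟩ := hf₁smooth
  obtain ⟨L, t, ht, hLip⟩ := (hf₁C1.contDiffAt (ball_mem_nhds 0 hε)).exists_lipschitzOnWith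
  have : Nontrivial (EuclideanSpace ℝ (Fin d)) :=
    Module.nontrivial_of_finrank_pos (R := ℝ) (by rw [finrank_euclideanSpace_fin]; omega)
  set V := volume.real (ball (0 : EuclideanSpace ℝ (Fin d)) 1)
  have hmoment (j : ℕ) : ∫ ω : EuclideanSpace ℝ (Fin d), ‖ω‖ ^ j * K ‖ω‖ = d * V * mK (d + j) := by
    rw [integral_norm_pow_mul_eq_intervalIntegral hR.le hKsupp, finrank_euclideanSpace_fin,
      hmK]
  have hdV : (d : ℝ) * V ≠ 0 := mul_ne_zero (by positivity)
    ((measureReal_ne_zero_iff measure_ball_lt_top.ne).2 (measure_ball_pos _ 0 one_pos).ne')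
  have hN := hK.isBigO_integral_kernelWeight_mul_sub hR hf₁int ht hLip 4
  have hD := hK.isBigO_integral_kernelWeight_mul_sub hR hf₁int ht hLip 0
  simp only [hmoment, kernelWeight, finrank_euclideanSpace_fin] at hN hD
  simp only [pow_zero, one_mul, mul_one, add_zero] at hD
  refine (isBigO_div_sub_mul (mul_ne_zero hf₁pos.ne' (mul_ne_zero hdV hmKd.ne')) hN hD
    (tendsto_nhdsWithin_of_tendsto_nhds tendsto_id)).congr' ?_ (.of_forall fun p => by ring)
  filter_upwards [self_mem_nhdsWithin] with p (hp : 0 < p)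
  rw [div_div_div_cancel_right₀ (pow_pos hp d).ne', mul_div_mul_left _ _ hf₁pos.ne',
    mul_div_mul_left _ _ hdV, hB]

/-- Step–bandwidth relation for the generalized curvature: the kernel-weighted mean
fourth-power pair distance equals `B₄ p⁴ + O(p⁵)` as the aspect ratio `p → 0⁺`. -/
theorem stmt_4 (d : ℕ) (hd : 1 ≤ d) (R : ℝ) (hR : 0 < R)
    (K : ℝ → ℝ) (hKmeas : Measurable K) (hKnonneg : ∀ s, 0 ≤ K s)
    (hKbdd : ∃ M, ∀ s, K s ≤ M)
    (hKsupp : ∀ s, R < s → K s = 0)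
    (mK : ℕ → ℝ) (hmK : ∀ j, mK j = ∫ s in (0:ℝ)..R, s ^ (j - 1) * K s)
    (hmKd : 0 < mK d)
    (B : ℕ → ℝ) (hB : ∀ p, B p = mK (d + p) / mK d)
    (f₁ : EuclideanSpace ℝ (Fin d) → ℝ) (hf₁int : Integrable f₁)
    (hf₁nonneg : ∀ x, 0 ≤ f₁ x) (hf₁pos : 0 < f₁ 0)
    (hf₁smooth : ∃ ε > 0,
      ContDiffOn ℝ 1 f₁ (Metric.ball (0 : EuclideanSpace ℝ (Fin d)) ε)) :
    (fun p : ℝ =>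
        (∫ ω : EuclideanSpace ℝ (Fin d), ‖ω‖ ^ 4 * K (‖ω‖ / p) * f₁ ω) /
          (∫ ω : EuclideanSpace ℝ (Fin d), K (‖ω‖ / p) * f₁ ω)
          - B 4 * p ^ 4)
      =O[𝓝[>] (0 : ℝ)] fun p => p ^ 5 :=
  stmt_4_general d hd R hR K hKmeas hKnonneg hKbdd hKsupp mK hmK hmKd B hB f₁ hf₁int hf₁pos
    hf₁smooth
end

section
/- Let d ≥ 2 be an integer and set c₁ᵈ = 2d, c₂ᵈ = 8d², c₃ᵈ = 4d(d−1). Let B₂ > 0 and B₄ > 0, and let A₂, A₄ : (0,∞) × {1, √2, 2} → ℝ be functions satisfying A₂(h,r) = r² h² B₂ + o(h²) and A₄(h,r) = r⁴ h⁴ B₄ + o(h⁴) as h → 0⁺, for each r ∈ {1, √2, 2}, with A₂(h,r), A₄(h,r) > 0. Define μ₂(h) := ( [c₂ᵈ + 8c₁ᵈ] A₄(h,1) + c₁ᵈ A₄(h,1)·A₂(h,2)/A₂(h,1) − c₁ᵈ A₄(h,2) ) / ( c₃ᵈ A₄(h,√2) − c₃ᵈ A₄(h,1)·A₂(h,√2)/A₂(h,1)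 ) and μ₁(h) := ( c₃ᵈ μ₂(h) A₂(h,√2) + c₁ᵈ A₂(h,2) ) / ( c₂ᵈ A₂(h,1) ). Then μ₁(h) = 1 + o(1) and μ₂(h) = 1 + o(1) as h → 0⁺. -/
open Filter Topology Asymptotics

/-!
The hypotheses say that `A₂(h, r) / h² → r² B₂` and `A₄(h, r) / h⁴ → r⁴ B₄`. Both `μ₂` and `μ₁`
are homogeneous of degree zero in the `A₂` values and (for `μ₂`) in the `A₄` values, so they may
be computed from these rescaled averages and converge to the value of the same formula at
`(B₂, 2B₂, 4B₂; B₄, 4B₄, 16B₄)`, which the choice of `c₁, c₂, c₃` makes equal to `1`.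
-/

lemma tendsto_div_of_isLittleO_sub_mul {α : Type*} {l : Filter α} {f g : α → ℝ} {c : ℝ}
    (hg : ∀ᶠ x in l, g x ≠ 0) (h : (fun x => f x - c * g x) =o[l] g) :
    Tendsto (fun x => f x / g x) l (𝓝 c) := by
  have := h.tendsto_div_nhds_zero.add_const c
  rw [zero_add] at this
  refine this.congr' ?_
  filter_upwards [hg] with x hx
  field_simp
  ring

/-- `aᵢ` and `bᵢ` stand for `A₂(h, r)` and `A₄(h, r)` at `r = 1, √2, 2`. -/
noncomputable def correctionMu₂ (c₁ c₂ c₃ a₁ a₂ a₃ b₁ b₂ b₃ : ℝ) : ℝ :=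
  ((c₂ + 8 * c₁) * b₁ + c₁ * b₁ * a₃ / a₁ - c₁ * b₃) / (c₃ * b₂ - c₃ * b₁ * a₂ / a₁)

/-- `m` stands for `μ₂(h)`. -/
noncomputable def correctionMu₁ (c₁ c₂ c₃ m a₁ a₂ a₃ : ℝ) : ℝ :=
  (c₃ * m * a₂ + c₁ * a₃) / (c₂ * a₁)

lemma correctionMu₂_div_div (c₁ c₂ c₃ a₁ a₂ a₃ b₁ b₂ b₃ : ℝ) {s t : ℝ} (hs : s ≠ 0) (ht : t ≠ 0) :
    correctionMu₂ c₁ c₂ c₃ (a₁ / s) (a₂ / s) (a₃ / s) (b₁ / t) (b₂ / t) (b₃ / t) =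
      correctionMu₂ c₁ c₂ c₃ a₁ a₂ a₃ b₁ b₂ b₃ := by
  simp only [correctionMu₂, mul_div_assoc, div_div_div_cancel_right₀ hs]
  conv_rhs => rw [← div_div_div_cancel_right₀ ht]
  congr 1 <;> ring

lemma correctionMu₁_div (c₁ c₂ c₃ m a₁ a₂ a₃ : ℝ) {s : ℝ} (hs : s ≠ 0) :
    correctionMu₁ c₁ c₂ c₃ m (a₁ / s) (a₂ / s) (a₃ / s) = correctionMu₁ c₁ c₂ c₃ m a₁ a₂ a₃ := by
  simp only [correctionMu₁]
  conv_rhs => rw [← div_div_div_cancel_right₀ hs]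
  congr 1 <;> ring

lemma correctionMu₂_eq_one {d B C : ℝ} (hd₀ : d ≠ 0) (hd₁ : d ≠ 1) (hB : B ≠ 0) (hC : C ≠ 0) :
    correctionMu₂ (2 * d) (8 * d ^ 2) (4 * d * (d - 1)) B (2 * B) (4 * B) C (4 * C) (16 * C) =
      1 := by
  have hne : 8 * d * (d - 1) * C ≠ 0 := by
    have := sub_ne_zero.2 hd₁
    positivity
  rw [correctionMu₂, ← div_self hne]
  congr 1 <;> field_simp <;> ring

lemma correctionMu₁_eq_one {d B : ℝ} (hd₀ : d ≠ 0) (hB : B ≠ 0) :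
    correctionMu₁ (2 * d) (8 * d ^ 2) (4 * d * (d - 1)) 1 B (2 * B) (4 * B) = 1 := by
  rw [correctionMu₁, div_eq_one_iff_eq (by positivity)]
  ring

section
variable {α : Type*} {l : Filter α} {d B C : ℝ}

lemma tendsto_correctionMu₂_one (hd₀ : d ≠ 0) (hd₁ : d ≠ 1) (hB : B ≠ 0) (hC : C ≠ 0)
    {a₁ a₂ a₃ b₁ b₂ b₃ : α → ℝ} (ha₁ : Tendsto a₁ l (𝓝 B)) (ha₂ : Tendsto a₂ l (𝓝 (2 * B)))
    (ha₃ : Tendsto a₃ l (𝓝 (4 * B))) (hb₁ : Tendsto b₁ l (𝓝 C))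
    (hb₂ : Tendsto b₂ l (𝓝 (4 * C))) (hb₃ : Tendsto b₃ l (𝓝 (16 * C))) :
    Tendsto (fun x => correctionMu₂ (2 * d) (8 * d ^ 2) (4 * d * (d - 1))
      (a₁ x) (a₂ x) (a₃ x) (b₁ x) (b₂ x) (b₃ x)) l (𝓝 1) := by
  have hden : 4 * d * (d - 1) * (4 * C) - 4 * d * (d - 1) * C * (2 * B) / B ≠ 0 := by
    rw [show 4 * d * (d - 1) * (4 * C) - 4 * d * (d - 1) * C * (2 * B) / B =
      8 * d * (d - 1) * C by field_simp; ring]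
    have := sub_ne_zero.2 hd₁
    positivity
  conv in 𝓝 1 => rw [← correctionMu₂_eq_one hd₀ hd₁ hB hC]
  exact ((((tendsto_const_nhds.mul hb₁).add
    (((tendsto_const_nhds.mul hb₁).mul ha₃).div ha₁ hB)).sub (tendsto_const_nhds.mul hb₃)).div
    ((tendsto_const_nhds.mul hb₂).sub (((tendsto_const_nhds.mul hb₁).mul ha₂).div ha₁ hB)) hden)

lemma tendsto_correctionMu₁_one (hd₀ : d ≠ 0) (hB : B ≠ 0)
    {m a₁ a₂ a₃ : α → ℝ} (hm : Tendsto m l (𝓝 1)) (ha₁ : Tendsto a₁ l (𝓝 B))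
    (ha₂ : Tendsto a₂ l (𝓝 (2 * B))) (ha₃ : Tendsto a₃ l (𝓝 (4 * B))) :
    Tendsto (fun x => correctionMu₁ (2 * d) (8 * d ^ 2) (4 * d * (d - 1))
      (m x) (a₁ x) (a₂ x) (a₃ x)) l (𝓝 1) := by
  conv in 𝓝 1 => rw [← correctionMu₁_eq_one hd₀ hB]
  exact (((tendsto_const_nhds.mul hm).mul ha₂).add (tendsto_const_nhds.mul ha₃)).div
    (tendsto_const_nhds.mul ha₁) (by positivity)

end

theorem stmt_5_general (d : ℕ) (hd : 2 ≤ d)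
    (c1 c2 c3 : ℝ) (hc1 : c1 = 2 * (d : ℝ)) (hc2 : c2 = 8 * (d : ℝ) ^ 2)
    (hc3 : c3 = 4 * (d : ℝ) * ((d : ℝ) - 1))
    (B2 B4 : ℝ) (hB2 : 0 < B2) (hB4 : 0 < B4)
    (A2 A4 : ℝ → ℝ → ℝ)
    (hA2 : ∀ r ∈ ({1, Real.sqrt 2, 2} : Set ℝ),
      (fun h => A2 h r - r ^ 2 * h ^ 2 * B2) =o[𝓝[>] (0:ℝ)] fun h => h ^ 2)
    (hA4 : ∀ r ∈ ({1, Real.sqrt 2, 2} : Set ℝ),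
      (fun h => A4 h r - r ^ 4 * h ^ 4 * B4) =o[𝓝[>] (0:ℝ)] fun h => h ^ 4)
    (μ2 μ1 : ℝ → ℝ)
    (hμ2 : ∀ h, μ2 h =
      ((c2 + 8 * c1) * A4 h 1 + c1 * A4 h 1 * A2 h 2 / A2 h 1 - c1 * A4 h 2) /
        (c3 * A4 h (Real.sqrt 2) - c3 * A4 h 1 * A2 h (Real.sqrt 2) / A2 h 1))
    (hμ1 : ∀ h, μ1 h =
      (c3 * μ2 h * A2 h (Real.sqrt 2) + c1 * A2 h 2) / (c2 * A2 h 1)) :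
    Tendsto μ1 (𝓝[>] (0:ℝ)) (𝓝 1) ∧ Tendsto μ2 (𝓝[>] (0:ℝ)) (𝓝 1) := by
  subst hc1 hc2 hc3
  have hd₀ : (d : ℝ) ≠ 0 := by norm_cast; omega
  have hd₁ : (d : ℝ) ≠ 1 := by norm_cast; omega
  have hpos : ∀ᶠ h in 𝓝[>] (0:ℝ), 0 < h := self_mem_nhdsWithin
  have ha2 : ∀ r ∈ ({1, √2, 2} : Set ℝ),
      Tendsto (fun h => A2 h r / h ^ 2) (𝓝[>] 0) (𝓝 (r ^ 2 * B2)) :=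
    fun r hr => tendsto_div_of_isLittleO_sub_mul (hpos.mono fun h hh => by positivity)
      (by simpa only [mul_right_comm] using hA2 r hr)
  have ha4 : ∀ r ∈ ({1, √2, 2} : Set ℝ),
      Tendsto (fun h => A4 h r / h ^ 4) (𝓝[>] 0) (𝓝 (r ^ 4 * B4)) :=
    fun r hr => tendsto_div_of_isLittleO_sub_mul (hpos.mono fun h hh => by positivity)
      (by simpa only [mul_right_comm] using hA4 r hr)
  have h21 := ha2 1 (by simp)
  have h2s := ha2 √2 (by simp)
  have h22 := ha2 2 (by simp)
  have h41 := ha4 1 (by simp)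
  have h4s := ha4 √2 (by simp)
  have h42 := ha4 2 (by simp)
  have hs4 : √2 ^ 4 = 4 := by rw [show 4 = 2 * 2 by rfl, pow_mul, Real.sq_sqrt] <;> norm_num
  norm_num [hs4] at h21 h2s h22 h41 h4s h42
  have hlim₂ : Tendsto μ2 (𝓝[>] 0) (𝓝 1) := by
    refine (tendsto_correctionMu₂_one hd₀ hd₁ hB2.ne' hB4.ne' h21 h2s h22 h41 h4s h42).congr' ?_
    filter_upwards [hpos] with h hh
    rw [hμ2, correctionMu₂_div_div _ _ _ _ _ _ _ _ _ (by positivity) (by positivity)]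
    rfl
  refine ⟨(tendsto_correctionMu₁_one hd₀ hB2.ne' hlim₂ h21 h2s h22).congr' ?_, hlim₂⟩
  filter_upwards [hpos] with h hh
  rw [hμ1, correctionMu₁_div _ _ _ _ _ _ _ (by positivity)]
  rfl

/-- The correction coefficients `μ₁` and `μ₂` of the sample generalized curvature
constraint tend to `1` as the bandwidth `h → 0⁺`. -/
theorem stmt_5 (d : ℕ) (hd : 2 ≤ d)
    (c1 c2 c3 : ℝ) (hc1 : c1 = 2 * (d : ℝ)) (hc2 : c2 = 8 * (d : ℝ) ^ 2)
    (hc3 : c3 = 4 * (d : ℝ) * ((d : ℝ) - 1))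
    (B2 B4 : ℝ) (hB2 : 0 < B2) (hB4 : 0 < B4)
    (A2 A4 : ℝ → ℝ → ℝ)
    (hA2 : ∀ r ∈ ({1, Real.sqrt 2, 2} : Set ℝ),
      (fun h => A2 h r - r ^ 2 * h ^ 2 * B2) =o[𝓝[>] (0:ℝ)] fun h => h ^ 2)
    (hA4 : ∀ r ∈ ({1, Real.sqrt 2, 2} : Set ℝ),
      (fun h => A4 h r - r ^ 4 * h ^ 4 * B4) =o[𝓝[>] (0:ℝ)] fun h => h ^ 4)
    (hA2pos : ∀ r ∈ ({1, Real.sqrt 2, 2} : Set ℝ), ∀ h : ℝ, 0 < h → 0 < A2 h r)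
    (hA4pos : ∀ r ∈ ({1, Real.sqrt 2, 2} : Set ℝ), ∀ h : ℝ, 0 < h → 0 < A4 h r)
    (μ2 μ1 : ℝ → ℝ)
    (hμ2 : ∀ h, μ2 h =
      ((c2 + 8 * c1) * A4 h 1 + c1 * A4 h 1 * A2 h 2 / A2 h 1 - c1 * A4 h 2) /
        (c3 * A4 h (Real.sqrt 2) - c3 * A4 h 1 * A2 h (Real.sqrt 2) / A2 h 1))
    (hμ1 : ∀ h, μ1 h =
      (c3 * μ2 h * A2 h (Real.sqrt 2) + c1 * A2 h 2) / (c2 * A2 h 1)) :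
    Tendsto μ1 (𝓝[>] (0:ℝ)) (𝓝 1) ∧ Tendsto μ2 (𝓝[>] (0:ℝ)) (𝓝 1) :=
  stmt_5_general d hd c1 c2 c3 hc1 hc2 hc3 B2 B4 hB2 hB4 A2 A4 hA2 hA4 μ2 μ1 hμ2 hμ1
end

section
/- Let d ≥ 1 be an integer, R > 0, and let K : [0,∞) → ℝ be a bounded, nonnegative, measurable function supported in [0,R]. For j ≥ 1 set m_{K,j} := ∫₀^R s^{j−1} K(s) ds and assume m_{K,d} > 0; define the kernel moment ratios B_p := m_{K,d+p}/m_{K,d}. Let F : [0,∞) → ℝ be continuous with F(t) = τ₂ t² + τ₄ t⁴ + o(t⁴) as t → 0⁺ for real constants τ₂, τ₄, and define the kernel average I_F(h) := (∫₀^R u^{d−1} K(u) F(hu) du)/m_{K,d}. Then, as h → 0⁺, I_F(h) − F(B₂^{1/2} h) = τ₄ (B₄ − B₂²) h⁴ + o(h⁴). -/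
open MeasureTheory Filter Topology Asymptotics

set_option maxHeartbeats 1000000

/-- Mean of the sample gradient constraint, differentiable case: if the semivariogram
satisfies `F(t) = τ₂ t² + τ₄ t⁴ + o(t⁴)` as `t → 0⁺`, then the kernel average satisfies
`I_F(h) − F(B₂^{1/2} h) = τ₄ (B₄ − B₂²) h⁴ + o(h⁴)`, so the kernel average is an
asymptotically unbiased estimator of `F` at the step `a₁ = B₂^{1/2} h`. -/
theorem stmt_7 (d : ℕ) (hd : 1 ≤ d) (R : ℝ) (hR : 0 < R)
    (K : ℝ → ℝ) (hKmeas : Measurable K) (hKnonneg : ∀ s, 0 ≤ K s)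
    (hKbdd : ∃ M, ∀ s, K s ≤ M)
    (hKsupp : ∀ s, R < s → K s = 0)
    (mK : ℕ → ℝ) (hmK : ∀ j, mK j = ∫ s in (0:ℝ)..R, s ^ (j - 1) * K s)
    (hmKd : 0 < mK d)
    (B : ℕ → ℝ) (hB : ∀ p, B p = mK (d + p) / mK d)
    (F : ℝ → ℝ) (hFcont : ContinuousOn F (Set.Ici 0))
    (τ₂ τ₄ : ℝ)
    (hF : (fun t => F t - (τ₂ * t ^ 2 + τ₄ * t ^ 4))
      =o[𝓝[>] (0:ℝ)] fun t => t ^ 4)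
    (IF : ℝ → ℝ)
    (hIF : ∀ h, IF h = (∫ u in (0:ℝ)..R, u ^ (d - 1) * K u * F (h * u)) / mK d) :
    (fun h => IF h - F (Real.sqrt (B 2) * h) - τ₄ * (B 4 - (B 2) ^ 2) * h ^ 4)
      =o[𝓝[>] (0:ℝ)] fun h => h ^ 4 := by
  obtain ⟨e, rfl⟩ : ∃ e, d = e + 1 := ⟨d - 1, by omega⟩
  obtain ⟨M, hM⟩ := hKbdd
  have hM0 : 0 ≤ M := le_trans (hKnonneg 0) (hM 0)
  set E : ℝ → ℝ := fun t => F t - (τ₂ * t ^ 2 + τ₄ * t ^ 4) with hE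
  -- integrability of u^j * K u on (0, R]
  have hint : ∀ j : ℕ, IntegrableOn (fun u => u ^ j * K u) (Set.Ioc 0 R) := by
    intro j
    refine Integrable.mono' (g := fun _ => R ^ j * M)
      (integrableOn_const measure_Ioc_lt_top.ne)
      (((measurable_id.pow_const j).mul hKmeas).aestronglyMeasurable) ?_
    rw [ae_restrict_iff' measurableSet_Ioc]
    filter_upwards with u hu
    have hu0 : (0:ℝ) ≤ u := hu.1.le
    rw [Real.norm_eq_abs, abs_of_nonneg (mul_nonneg (pow_nonneg hu0 j) (hKnonneg u))]
    exact mul_le_mul (pow_le_pow_left₀ hu0 hu.2 j) (hM u) (hKnonneg u)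
      (pow_nonneg (le_trans hu0 hu.2) j)
  have hmK' : ∀ j : ℕ, mK (j + 1) = ∫ u in Set.Ioc 0 R, u ^ j * K u := by
    intro j
    rw [hmK, intervalIntegral.integral_of_le hR.le]
    simp
  have hmKnn : ∀ j : ℕ, 0 ≤ ∫ u in Set.Ioc 0 R, u ^ j * K u := fun j =>
    setIntegral_nonneg measurableSet_Ioc fun u hu =>
      mul_nonneg (pow_nonneg hu.1.le j) (hKnonneg u)
  have hm : 0 < mK (e + 1) := hmKd
  have hB2 : B 2 = mK (e + 3) / mK (e + 1) := hB 2
  have hB4 : B 4 = mK (e + 5) / mK (e + 1) := hB 4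
  have hB2nn : 0 ≤ B 2 := by
    rw [hB2, hmK' (e + 2)]
    exact div_nonneg (hmKnn (e + 2)) hm.le
  -- F 0 = 0
  have hE0 : Tendsto E (𝓝[>] (0:ℝ)) (𝓝 0) := by
    have h4 : Tendsto (fun t : ℝ => t ^ 4) (𝓝[>] (0:ℝ)) (𝓝 0) := by
      have : Tendsto (fun t : ℝ => t ^ 4) (𝓝 (0:ℝ)) (𝓝 0) := by
        simpa using (continuous_pow 4).tendsto (0:ℝ)
      exact this.mono_left nhdsWithin_le_nhds
    have := hF.tendsto_div_nhds_zero
    have hEeq : ∀ᶠ t in 𝓝[>] (0:ℝ), E t = (E t / t ^ 4) * t ^ 4 := by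
      filter_upwards [eventually_mem_nhdsWithin] with t ht
      have : t ^ 4 ≠ 0 := pow_ne_zero 4 (ne_of_gt ht)
      rw [div_mul_cancel₀ _ this]
    rw [tendsto_congr' hEeq]
    simpa using this.mul h4
  have hF0 : F 0 = 0 := by
    have h1 : Tendsto F (𝓝[>] (0:ℝ)) (𝓝 (F 0)) :=
      (hFcont 0 Set.self_mem_Ici).mono_left (nhdsWithin_mono _ Set.Ioi_subset_Ici_self)
    have hpoly : Tendsto (fun t : ℝ => τ₂ * t ^ 2 + τ₄ * t ^ 4) (𝓝[>] (0:ℝ)) (𝓝 0) := by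
      have : Tendsto (fun t : ℝ => τ₂ * t ^ 2 + τ₄ * t ^ 4) (𝓝 (0:ℝ))
          (𝓝 (τ₂ * 0 ^ 2 + τ₄ * 0 ^ 4)) := by
        exact (Continuous.tendsto (by continuity) 0)
      simpa using this.mono_left nhdsWithin_le_nhds
    have h2 : Tendsto F (𝓝[>] (0:ℝ)) (𝓝 0) := by
      have := hE0.add hpoly
      simp only [hE] at this
      simpa using this
    exact tendsto_nhds_unique h1 h2
  have hE00 : E 0 = 0 := by simp [hE, hF0]
  -- integrability of the F-part
  have hFint : ∀ h : ℝ, 0 ≤ h →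
      IntegrableOn (fun u => u ^ e * K u * F (h * u)) (Set.Ioc 0 R) := by
    intro h hh
    have hcont : ContinuousOn (fun u => F (h * u)) (Set.Icc 0 R) :=
      hFcont.comp (continuous_const.mul continuous_id).continuousOn
        (fun u hu => mul_nonneg hh hu.1)
    obtain ⟨C, hC⟩ := isCompact_Icc.exists_bound_of_continuousOn hcont
    refine Integrable.mono' (g := fun _ => R ^ e * M * C)
      (integrableOn_const measure_Ioc_lt_top.ne)
      ((((measurable_id.pow_const e).mul hKmeas).aemeasurable.mul
        ((hcont.mono Set.Ioc_subset_Icc_self).aemeasurable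
          measurableSet_Ioc)).aestronglyMeasurable) ?_
    rw [ae_restrict_iff' measurableSet_Ioc]
    filter_upwards with u hu
    have hu0 : (0:ℝ) ≤ u := hu.1.le
    have hmem : u ∈ Set.Icc 0 R := Set.Ioc_subset_Icc_self hu
    calc ‖u ^ e * K u * F (h * u)‖ = ‖u ^ e * K u‖ * ‖F (h * u)‖ := norm_mul _ _
      _ ≤ (R ^ e * M) * C := by
          refine mul_le_mul ?_ (hC u hmem) (norm_nonneg _)
            (mul_nonneg (pow_nonneg (le_trans hu0 hu.2) e) hM0)
          rw [Real.norm_eq_abs, abs_of_nonneg (mul_nonneg (pow_nonneg hu0 e) (hKnonneg u))]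
          exact mul_le_mul (pow_le_pow_left₀ hu0 hu.2 e) (hM u) (hKnonneg u)
            (pow_nonneg (le_trans hu0 hu.2) e)
  -- integrability of the E-part
  have hEint : ∀ h : ℝ, 0 ≤ h →
      IntegrableOn (fun u => u ^ e * K u * E (h * u)) (Set.Ioc 0 R) := by
    intro h hh
    have hpq : IntegrableOn (fun u => (τ₂ * h ^ 2) * (u ^ (e + 2) * K u)
        + (τ₄ * h ^ 4) * (u ^ (e + 4) * K u)) (Set.Ioc 0 R) :=
      ((hint (e + 2)).const_mul (τ₂ * h ^ 2)).add ((hint (e + 4)).const_mul (τ₄ * h ^ 4))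
    have h1 : IntegrableOn (fun u => u ^ e * K u * F (h * u)
        - ((τ₂ * h ^ 2) * (u ^ (e + 2) * K u) + (τ₄ * h ^ 4) * (u ^ (e + 4) * K u)))
        (Set.Ioc 0 R) := (hFint h hh).sub hpq
    refine h1.congr (ae_of_all _ fun u => ?_)
    simp only [hE, pow_add]
    ring
  -- decomposition of the kernel integral
  have hdecomp : ∀ h : ℝ, 0 ≤ h →
      (∫ u in Set.Ioc 0 R, u ^ e * K u * F (h * u))
        = τ₂ * h ^ 2 * mK (e + 3) + τ₄ * h ^ 4 * mK (e + 5)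
          + ∫ u in Set.Ioc 0 R, u ^ e * K u * E (h * u) := by
    intro h hh
    have heq : (fun u => u ^ e * K u * F (h * u))
        = fun u => ((τ₂ * h ^ 2) * (u ^ (e + 2) * K u)
            + (τ₄ * h ^ 4) * (u ^ (e + 4) * K u)) + u ^ e * K u * E (h * u) := by
      funext u
      simp only [hE, pow_add, mul_pow]
      ring
    have hpq : IntegrableOn (fun u => (τ₂ * h ^ 2) * (u ^ (e + 2) * K u)
        + (τ₄ * h ^ 4) * (u ^ (e + 4) * K u)) (Set.Ioc 0 R) :=
      ((hint (e + 2)).const_mul (τ₂ * h ^ 2)).add ((hint (e + 4)).const_mul (τ₄ * h ^ 4))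
    have h2 : IntegrableOn (fun u => (τ₂ * h ^ 2) * (u ^ (e + 2) * K u)) (Set.Ioc 0 R) :=
      (hint (e + 2)).const_mul (τ₂ * h ^ 2)
    have h4 : IntegrableOn (fun u => (τ₄ * h ^ 4) * (u ^ (e + 4) * K u)) (Set.Ioc 0 R) :=
      (hint (e + 4)).const_mul (τ₄ * h ^ 4)
    rw [heq, integral_add hpq (hEint h hh), integral_add h2 h4,
      integral_const_mul, integral_const_mul, hmK' (e + 2), hmK' (e + 4)]
  -- the key pointwise identity
  have hkey : ∀ h : ℝ, 0 < h →
      IF h - F (Real.sqrt (B 2) * h) - τ₄ * (B 4 - (B 2) ^ 2) * h ^ 4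
        = (∫ u in Set.Ioc 0 R, u ^ e * K u * E (h * u)) / mK (e + 1)
          - E (Real.sqrt (B 2) * h) := by
    intro h hh
    have hIF' : IF h = (τ₂ * h ^ 2 * mK (e + 3) + τ₄ * h ^ 4 * mK (e + 5)
        + ∫ u in Set.Ioc 0 R, u ^ e * K u * E (h * u)) / mK (e + 1) := by
      rw [hIF h, intervalIntegral.integral_of_le hR.le]
      simp only [Nat.add_sub_cancel]
      rw [hdecomp h hh.le]
    have hs2 : (Real.sqrt (B 2) * h) ^ 2 = B 2 * h ^ 2 := by
      rw [mul_pow, Real.sq_sqrt hB2nn]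
    have hs4 : (Real.sqrt (B 2) * h) ^ 4 = (B 2) ^ 2 * h ^ 4 := by
      have : (Real.sqrt (B 2) * h) ^ 4 = ((Real.sqrt (B 2) * h) ^ 2) ^ 2 := by ring
      rw [this, hs2]; ring
    have hFs : F (Real.sqrt (B 2) * h) = E (Real.sqrt (B 2) * h)
        + τ₂ * (B 2 * h ^ 2) + τ₄ * ((B 2) ^ 2 * h ^ 4) := by
      simp only [hE]
      rw [← hs2, ← hs4]; ring
    rw [hIF', hFs, hB2, hB4]
    field_simp
    ring
  -- the E(√B₂ h) term is o(h⁴)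
  have hEo : (fun h => E (Real.sqrt (B 2) * h)) =o[𝓝[>] (0:ℝ)] fun h => h ^ 4 := by
    rcases eq_or_lt_of_le hB2nn with hz | hpos
    · have : (fun h : ℝ => E (Real.sqrt (B 2) * h)) = fun _ => (0:ℝ) := by
        funext h
        rw [← hz, Real.sqrt_zero, zero_mul, hE00]
      rw [this]
      exact isLittleO_zero _ _
    · have hs : 0 < Real.sqrt (B 2) := Real.sqrt_pos.mpr hpos
      have htend : Tendsto (fun h : ℝ => Real.sqrt (B 2) * h) (𝓝[>] (0:ℝ)) (𝓝[>] (0:ℝ)) := by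
        rw [tendsto_nhdsWithin_iff]
        constructor
        · have : Tendsto (fun h : ℝ => Real.sqrt (B 2) * h) (𝓝 (0:ℝ))
              (𝓝 (Real.sqrt (B 2) * 0)) := (continuous_const.mul continuous_id).tendsto 0
          simpa using this.mono_left nhdsWithin_le_nhds
        · filter_upwards [eventually_mem_nhdsWithin] with h hh
          exact mul_pos hs hh
      have hcomp := hF.comp_tendsto htend
      have : ((fun t : ℝ => t ^ 4) ∘ fun h : ℝ => Real.sqrt (B 2) * h)
          =O[𝓝[>] (0:ℝ)] fun h : ℝ => h ^ 4 := by
        have heq : ((fun t : ℝ => t ^ 4) ∘ fun h : ℝ => Real.sqrt (B 2) * h)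
            = fun h : ℝ => (B 2) ^ 2 * h ^ 4 := by
          funext h
          simp only [Function.comp]
          rw [mul_pow]
          have : (Real.sqrt (B 2)) ^ 4 = ((Real.sqrt (B 2)) ^ 2) ^ 2 := by ring
          rw [this, Real.sq_sqrt hB2nn]
        rw [heq]
        exact (isBigO_refl (fun h : ℝ => h ^ 4) _).const_mul_left _
      exact hcomp.trans_isBigO this
  -- the integral remainder term is o(h⁴)
  have hJo : (fun h => (∫ u in Set.Ioc 0 R, u ^ e * K u * E (h * u)) / mK (e + 1))
      =o[𝓝[>] (0:ℝ)] fun h => h ^ 4 := by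
    rw [isLittleO_iff]
    intro c hc
    set C : ℝ := ∫ u in Set.Ioc 0 R, u ^ (e + 4) * K u with hCdef
    have hCnn : 0 ≤ C := hmKnn (e + 4)
    set ε : ℝ := c * mK (e + 1) / (C + 1) with hεdef
    have hε : 0 < ε := by positivity
    obtain ⟨δ, hδ, hδε⟩ : ∃ δ > 0, ∀ t : ℝ, 0 < t → t < δ → ‖E t‖ ≤ ε * ‖t ^ 4‖ := by
      have hev := (isLittleO_iff.mp hF) hε
      rw [eventually_iff, Metric.mem_nhdsWithin_iff] at hev
      obtain ⟨δ, hδ, hsub⟩ := hev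
      refine ⟨δ, hδ, fun t ht htδ => ?_⟩
      have hmem : t ∈ Metric.ball (0:ℝ) δ ∩ Set.Ioi 0 := by
        refine ⟨?_, ht⟩
        rw [Metric.mem_ball, Real.dist_eq, sub_zero, abs_of_pos ht]; exact htδ
      exact hsub hmem
    have hev : ∀ᶠ h : ℝ in 𝓝[>] (0:ℝ), 0 < h ∧ h < δ / R := by
      filter_upwards [eventually_mem_nhdsWithin,
        (eventually_lt_nhds (show (0:ℝ) < δ / R by positivity)).filter_mono
          nhdsWithin_le_nhds] with h h1 h2
      exact ⟨h1, h2⟩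
    filter_upwards [hev] with h ⟨hh, hhδ⟩
    have hbound : ∀ u ∈ Set.Ioc (0:ℝ) R,
        ‖u ^ e * K u * E (h * u)‖ ≤ ε * h ^ 4 * (u ^ (e + 4) * K u) := by
      intro u hu
      have hu0 : 0 < u := hu.1
      have hhu : 0 < h * u := mul_pos hh hu0
      have hhuδ : h * u < δ := by
        calc h * u ≤ h * R := mul_le_mul_of_nonneg_left hu.2 hh.le
          _ < δ := (lt_div_iff₀ hR).mp hhδ
      have := hδε (h * u) hhu hhuδ
      calc ‖u ^ e * K u * E (h * u)‖ = u ^ e * K u * ‖E (h * u)‖ := by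
            rw [norm_mul, Real.norm_eq_abs (u ^ e * K u),
              abs_of_nonneg (mul_nonneg (pow_nonneg hu0.le e) (hKnonneg u))]
        _ ≤ u ^ e * K u * (ε * ‖(h * u) ^ 4‖) := by
            exact mul_le_mul_of_nonneg_left this
              (mul_nonneg (pow_nonneg hu0.le e) (hKnonneg u))
        _ = ε * h ^ 4 * (u ^ (e + 4) * K u) := by
            rw [Real.norm_eq_abs, abs_of_nonneg (pow_nonneg hhu.le 4)]
            simp only [pow_add, mul_pow]
            ring
    have hJle : ‖∫ u in Set.Ioc 0 R, u ^ e * K u * E (h * u)‖ ≤ ε * h ^ 4 * C := by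
      have hgint : IntegrableOn (fun u => ε * h ^ 4 * (u ^ (e + 4) * K u))
          (Set.Ioc 0 R) := (hint (e + 4)).const_mul _
      have := norm_integral_le_of_norm_le hgint
        ((ae_restrict_iff' measurableSet_Ioc).mpr (ae_of_all _ hbound))
      rw [integral_const_mul] at this
      exact this
    rw [Real.norm_eq_abs, abs_div, abs_of_pos hm, div_le_iff₀ hm]
    have hεC : ε * C ≤ c * mK (e + 1) := by
      rw [hεdef, div_mul_eq_mul_div, div_le_iff₀ (by positivity : (0:ℝ) < C + 1)]
      nlinarith [mul_nonneg hc.le hm.le]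
    calc |∫ u in Set.Ioc 0 R, u ^ e * K u * E (h * u)| ≤ ε * h ^ 4 * C := hJle
      _ = (ε * C) * h ^ 4 := by ring
      _ ≤ (c * mK (e + 1)) * h ^ 4 :=
          mul_le_mul_of_nonneg_right hεC (pow_nonneg hh.le 4)
      _ = c * ‖h ^ 4‖ * mK (e + 1) := by
          rw [Real.norm_eq_abs, abs_of_nonneg (pow_nonneg hh.le 4)]; ring
  -- combine
  have := hJo.sub hEo
  refine this.congr' ?_ EventuallyEq.rfl
  filter_upwards [eventually_mem_nhdsWithin] with h hh
  exact (hkey h hh).symm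
end

section
/- Let d ≥ 1 be an integer, R > 0, and let K : [0,∞) → ℝ be a bounded, nonnegative, measurable function supported in [0,R]. For j ≥ 1 set m_{K,j} := ∫₀^R s^{j−1} K(s) ds and assume m_{K,d} > 0; define the kernel moment ratios B_p := m_{K,d+p}/m_{K,d}. Let F : [0,∞) → ℝ be continuous with F(t) = τ₁ t + τ₂ t² + τ₃ t³ + o(t³) as t → 0⁺ for real constants τ₁, τ₂, τ₃, and define the kernel average I_F(h) := (∫₀^R u^{d−1} K(u) F(hu) du)/m_{K,d}. Then, as h → 0⁺, I_F(h) − F(B₁ h) = τ₂ (B₂ − B₁²) h² + τ₃ (B₃ − B₁³) h³ + o(h³). -/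
open MeasureTheory Filter Topology Asymptotics

/-! Write `F = P + E` with `P` the cubic Taylor polynomial and `E(t) = o(t³)`. The
normalised kernel average sends `t ↦ (h t)ʲ` to `Bⱼ hʲ`, so for `P` the difference
`I_P(h) − P(B₁ h)` is exactly the claimed cubic expression, the linear terms cancelling
because of the choice of step `B₁ h`. The remainder contributes `o(h³)` twice: to the kernel
average uniformly in `u ∈ (0, R]`, and at the point `B₁ h`, where `B₁ > 0` because the weight
has positive mass on `(0, R]`. -/

open Set
open scoped Interval

-- For the weight `w u = u ^ (d - 1) * K u` these are the paper's `m_{K,d+j}` and `B_p`.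
noncomputable def weightedMoment (w : ℝ → ℝ) (R : ℝ) (j : ℕ) : ℝ :=
  ∫ u in (0:ℝ)..R, w u * u ^ j

noncomputable def momentRatio (w : ℝ → ℝ) (R : ℝ) (p : ℕ) : ℝ :=
  weightedMoment w R p / weightedMoment w R 0

theorem intervalIntegrable_of_norm_le {f : ℝ → ℝ} {a b M : ℝ}
    (hf : AEStronglyMeasurable f volume) (hM : ∀ x, ‖f x‖ ≤ M) :
    IntervalIntegrable f volume a b :=
  ⟨Integrable.of_bound hf.restrict M (ae_of_all _ hM),
    Integrable.of_bound hf.restrict M (ae_of_all _ hM)⟩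

theorem IntervalIntegrable.mul_pow {w : ℝ → ℝ} {a b : ℝ}
    (hw : IntervalIntegrable w volume a b) (j : ℕ) :
    IntervalIntegrable (fun u => w u * u ^ j) volume a b :=
  hw.mul_continuousOn (continuous_pow j).continuousOn

theorem weightedMoment_pos {w : ℝ → ℝ} {R : ℝ} (hR : 0 < R)
    (hw0 : ∀ u ∈ Ioc 0 R, 0 ≤ w u) (hw : IntervalIntegrable w volume 0 R)
    (hm0 : 0 < weightedMoment w R 0) (j : ℕ) :
    0 < weightedMoment w R j := by
  have hnonneg : ∀ k : ℕ, 0 ≤ᵐ[volume.restrict (Ι 0 R)] fun u => w u * u ^ k := fun k => by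
    rw [uIoc_of_le hR.le]
    exact ae_restrict_of_forall_mem measurableSet_Ioc fun u hu =>
      mul_nonneg (hw0 u hu) (pow_nonneg hu.1.le k)
  have hsupport : Function.support (fun u => w u * u ^ j) ∩ Ioc 0 R
      = Function.support (fun u => w u * u ^ 0) ∩ Ioc 0 R := by
    ext u
    by_cases hu : u ∈ Ioc 0 R
    · simp [hu, (pow_pos hu.1 _).ne']
    · simp [hu]
  unfold weightedMoment at hm0 ⊢
  rw [intervalIntegral.integral_pos_iff_support_of_nonneg_ae' (hnonneg 0) (hw.mul_pow 0)]
    at hm0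
  rwa [intervalIntegral.integral_pos_iff_support_of_nonneg_ae' (hnonneg j) (hw.mul_pow j),
    hsupport]

theorem integral_mul_cubic {w : ℝ → ℝ} {R : ℝ} (hw : IntervalIntegrable w volume 0 R)
    (τ₁ τ₂ τ₃ h : ℝ) :
    ∫ u in (0:ℝ)..R, w u * (τ₁ * (h * u) + τ₂ * (h * u) ^ 2 + τ₃ * (h * u) ^ 3)
      = τ₁ * h * weightedMoment w R 1 + τ₂ * h ^ 2 * weightedMoment w R 2
        + τ₃ * h ^ 3 * weightedMoment w R 3 := by
  have hexpand : (fun u => w u * (τ₁ * (h * u) + τ₂ * (h * u) ^ 2 + τ₃ * (h * u) ^ 3))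
      = fun u => τ₁ * h * (w u * u ^ 1) + τ₂ * h ^ 2 * (w u * u ^ 2)
        + τ₃ * h ^ 3 * (w u * u ^ 3) := by
    funext u; ring
  rw [hexpand, intervalIntegral.integral_add, intervalIntegral.integral_add,
    intervalIntegral.integral_const_mul, intervalIntegral.integral_const_mul,
    intervalIntegral.integral_const_mul] <;>
    simp only [weightedMoment, IntervalIntegrable.const_mul, IntervalIntegrable.add,
      hw.mul_pow]

theorem isLittleO_integral_mul_comp {w E : ℝ → ℝ} {R : ℝ} {n : ℕ} (hR : 0 < R)
    (hw0 : ∀ u ∈ Ioc 0 R, 0 ≤ w u)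
    (hwn : IntervalIntegrable (fun u => w u * u ^ n) volume 0 R)
    (hE : E =o[𝓝[>] 0] fun t => t ^ n) :
    (fun h => ∫ u in (0:ℝ)..R, w u * E (h * u)) =o[𝓝[>] 0] fun h => h ^ n := by
  rw [isLittleO_iff]
  intro c hc
  set m := ∫ u in (0:ℝ)..R, w u * u ^ n
  set ε := c / (|m| + 1)
  obtain ⟨δ, hδ, hEδ⟩ :=
    (nhdsGT_basis (0:ℝ)).eventually_iff.mp (hE.def (by positivity : 0 < ε))
  filter_upwards [Ioo_mem_nhdsGT (div_pos hδ hR)] with h ⟨hh0, hhδ⟩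
  have hbound : ∀ᵐ u ∂volume.restrict (Ι 0 R),
      ‖w u * E (h * u)‖ ≤ ε * h ^ n * (w u * u ^ n) := by
    rw [uIoc_of_le hR.le]
    refine ae_restrict_of_forall_mem measurableSet_Ioc fun u hu => ?_
    have hhu : h * u ∈ Ioo 0 δ := ⟨mul_pos hh0 hu.1,
      (mul_le_mul_of_nonneg_left hu.2 hh0.le).trans_lt ((lt_div_iff₀ hR).mp hhδ)⟩
    calc ‖w u * E (h * u)‖ = w u * ‖E (h * u)‖ := by
          rw [norm_mul, Real.norm_of_nonneg (hw0 u hu)]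
      _ ≤ w u * (ε * ‖(h * u) ^ n‖) := mul_le_mul_of_nonneg_left (hEδ hhu) (hw0 u hu)
      _ = ε * h ^ n * (w u * u ^ n) := by
          rw [Real.norm_of_nonneg (pow_nonneg hhu.1.le n)]; ring
  have hεm : ε * |m| ≤ c := by
    rw [div_mul_eq_mul_div, div_le_iff₀ (by positivity)]
    linarith
  calc ‖∫ u in (0:ℝ)..R, w u * E (h * u)‖
      ≤ |∫ u in (0:ℝ)..R, ε * h ^ n * (w u * u ^ n)| :=
        intervalIntegral.norm_integral_le_abs_of_norm_le hbound (hwn.const_mul _)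
    _ = ε * |m| * ‖h ^ n‖ := by
        rw [intervalIntegral.integral_const_mul, abs_mul, abs_of_pos (by positivity),
          Real.norm_of_nonneg (by positivity)]
        ring
    _ ≤ c * ‖h ^ n‖ := by gcongr

theorem Asymptotics.IsLittleO.comp_const_mul_nhdsGT {E : Type*} [NormedAddCommGroup E]
    {f : ℝ → E} {n : ℕ} (hf : f =o[𝓝[>] 0] fun t => t ^ n) {c : ℝ} (hc : 0 < c) :
    (fun h => f (c * h)) =o[𝓝[>] 0] fun h => h ^ n := by
  have hmap : Tendsto (c * ·) (𝓝[>] (0:ℝ)) (𝓝[>] 0) :=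
    tendsto_iff_comap.mpr (comap_mulLeft_nhdsGT_zero hc).ge
  refine (hf.comp_tendsto hmap).trans_isBigO ?_
  simpa only [Function.comp_def, mul_pow] using isBigO_const_mul_self (c ^ n) (· ^ n) (𝓝[>] 0)

theorem weightedAverage_sub_comp_momentRatio_isLittleO {w F : ℝ → ℝ} {R : ℝ} (hR : 0 < R)
    (hw0 : ∀ u ∈ Ioc 0 R, 0 ≤ w u) (hw : IntervalIntegrable w volume 0 R)
    (hm0 : 0 < weightedMoment w R 0) (hF : ContinuousOn F (Ici 0)) {τ₁ τ₂ τ₃ : ℝ}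
    (hFo : (fun t => F t - (τ₁ * t + τ₂ * t ^ 2 + τ₃ * t ^ 3)) =o[𝓝[>] 0]
      fun t => t ^ 3) :
    (fun h => (∫ u in (0:ℝ)..R, w u * F (h * u)) / weightedMoment w R 0
        - F (momentRatio w R 1 * h)
        - (τ₂ * (momentRatio w R 2 - momentRatio w R 1 ^ 2) * h ^ 2
          + τ₃ * (momentRatio w R 3 - momentRatio w R 1 ^ 3) * h ^ 3))
      =o[𝓝[>] 0] fun h => h ^ 3 := by
  set E := fun t => F t - (τ₁ * t + τ₂ * t ^ 2 + τ₃ * t ^ 3)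
  have hb1 : 0 < momentRatio w R 1 := div_pos (weightedMoment_pos hR hw0 hw hm0 1) hm0
  have hwF : ∀ h : ℝ, 0 ≤ h → IntervalIntegrable (fun u => w u * F (h * u)) volume 0 R :=
    fun h hh => hw.mul_continuousOn <| hF.comp (by fun_prop) fun u hu => by
      rw [uIcc_of_le hR.le] at hu
      exact mul_nonneg hh hu.1
  have hremainder : ∀ h : ℝ, 0 < h →
      (∫ u in (0:ℝ)..R, w u * F (h * u)) / weightedMoment w R 0 - F (momentRatio w R 1 * h)
        - (τ₂ * (momentRatio w R 2 - momentRatio w R 1 ^ 2) * h ^ 2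
          + τ₃ * (momentRatio w R 3 - momentRatio w R 1 ^ 3) * h ^ 3)
      = (weightedMoment w R 0)⁻¹ * (∫ u in (0:ℝ)..R, w u * E (h * u))
        - E (momentRatio w R 1 * h) := by
    intro h hh
    have hsplit : ∫ u in (0:ℝ)..R, w u * E (h * u)
        = (∫ u in (0:ℝ)..R, w u * F (h * u))
          - ∫ u in (0:ℝ)..R,
              w u * (τ₁ * (h * u) + τ₂ * (h * u) ^ 2 + τ₃ * (h * u) ^ 3) := by
      simp only [E, mul_sub]
      exact intervalIntegral.integral_sub (hwF h hh.le)
        (hw.mul_continuousOn (by fun_prop : Continuous _).continuousOn)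
    rw [hsplit, integral_mul_cubic hw]
    simp only [E, momentRatio]
    field_simp
    ring
  have hintegral := (isLittleO_integral_mul_comp hR hw0 (hw.mul_pow 3) hFo).const_mul_left
    (weightedMoment w R 0)⁻¹
  refine (hintegral.sub (hFo.comp_const_mul_nhdsGT hb1)).congr' ?_ EventuallyEq.rfl
  filter_upwards [self_mem_nhdsWithin] with h hh using (hremainder h hh).symm

theorem stmt_8_general (d : ℕ) (hd : 1 ≤ d) (R : ℝ) (hR : 0 < R)
    (K : ℝ → ℝ) (hKmeas : Measurable K) (hKnonneg : ∀ s, 0 ≤ K s)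
    (hKbdd : ∃ M, ∀ s, K s ≤ M)
    (mK : ℕ → ℝ) (hmK : ∀ j, mK j = ∫ s in (0:ℝ)..R, s ^ (j - 1) * K s)
    (hmKd : 0 < mK d)
    (B : ℕ → ℝ) (hB : ∀ p, B p = mK (d + p) / mK d)
    (F : ℝ → ℝ) (hFcont : ContinuousOn F (Set.Ici 0))
    (τ₁ τ₂ τ₃ : ℝ)
    (hF : (fun t => F t - (τ₁ * t + τ₂ * t ^ 2 + τ₃ * t ^ 3))
      =o[𝓝[>] (0:ℝ)] fun t => t ^ 3)
    (IF : ℝ → ℝ)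
    (hIF : ∀ h, IF h = (∫ u in (0:ℝ)..R, u ^ (d - 1) * K u * F (h * u)) / mK d) :
    (fun h => IF h - F (B 1 * h)
        - (τ₂ * (B 2 - (B 1) ^ 2) * h ^ 2 + τ₃ * (B 3 - (B 1) ^ 3) * h ^ 3))
      =o[𝓝[>] (0:ℝ)] fun h => h ^ 3 := by
  obtain ⟨M, hM⟩ := hKbdd
  set w : ℝ → ℝ := fun u => u ^ (d - 1) * K u
  have hKint : IntervalIntegrable K volume 0 R :=
    intervalIntegrable_of_norm_le hKmeas.aestronglyMeasurable fun s => by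
      rw [Real.norm_of_nonneg (hKnonneg s)]; exact hM s
  have hmoment : ∀ p, mK (d + p) = weightedMoment w R p := fun p => by
    rw [hmK, weightedMoment]
    congr 1 with s
    rw [show d + p - 1 = d - 1 + p by omega, pow_add]; ring
  have hmoment_zero : mK d = weightedMoment w R 0 := hmoment 0
  have hB_eq : ∀ p, B p = momentRatio w R p := fun p => by
    rw [hB, hmoment, hmoment_zero, momentRatio]
  simp only [hIF, hB_eq, hmoment_zero]
  exact weightedAverage_sub_comp_momentRatio_isLittleO hR
    (fun u hu => mul_nonneg (pow_nonneg hu.1.le _) (hKnonneg u))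
    (hKint.continuousOn_mul (continuous_pow _).continuousOn) (hmoment_zero ▸ hmKd) hFcont hF

/-- Mean of the sample gradient constraint, continuous (non-differentiable) case,
unbiasedness at the modified step `a₁' = B₁ h`: if
`F(t) = τ₁ t + τ₂ t² + τ₃ t³ + o(t³)` as `t → 0⁺`, then
`I_F(h) − F(B₁ h) = τ₂ (B₂ − B₁²) h² + τ₃ (B₃ − B₁³) h³ + o(h³)`. -/
theorem stmt_8 (d : ℕ) (hd : 1 ≤ d) (R : ℝ) (hR : 0 < R)
    (K : ℝ → ℝ) (hKmeas : Measurable K) (hKnonneg : ∀ s, 0 ≤ K s)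
    (hKbdd : ∃ M, ∀ s, K s ≤ M)
    (hKsupp : ∀ s, R < s → K s = 0)
    (mK : ℕ → ℝ) (hmK : ∀ j, mK j = ∫ s in (0:ℝ)..R, s ^ (j - 1) * K s)
    (hmKd : 0 < mK d)
    (B : ℕ → ℝ) (hB : ∀ p, B p = mK (d + p) / mK d)
    (F : ℝ → ℝ) (hFcont : ContinuousOn F (Set.Ici 0))
    (τ₁ τ₂ τ₃ : ℝ)
    (hF : (fun t => F t - (τ₁ * t + τ₂ * t ^ 2 + τ₃ * t ^ 3))
      =o[𝓝[>] (0:ℝ)] fun t => t ^ 3)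
    (IF : ℝ → ℝ)
    (hIF : ∀ h, IF h = (∫ u in (0:ℝ)..R, u ^ (d - 1) * K u * F (h * u)) / mK d) :
    (fun h => IF h - F (B 1 * h)
        - (τ₂ * (B 2 - (B 1) ^ 2) * h ^ 2 + τ₃ * (B 3 - (B 1) ^ 3) * h ^ 3))
      =o[𝓝[>] (0:ℝ)] fun h => h ^ 3 :=
  stmt_8_general d hd R hR K hKmeas hKnonneg hKbdd mK hmK hmKd B hB F hFcont τ₁ τ₂ τ₃ hF IF hIF
end

section
/- Let d ≥ 1 be an integer, R > 0, and let K : [0,∞) → ℝ be a bounded, nonnegative, measurable function supported in [0,R]. For j ≥ 1 set m_{K,j} := ∫₀^R s^{j−1} K(s) ds and assume m_{K,d} > 0; define the kernel moment ratios B_p := m_{K,d+p}/m_{K,d}. Let F : [0,∞) → ℝ be continuous with F(0) = 0, F(t) > 0 for small t > 0, and F(t) = τ₁ t + τ₂ t² + τ₃ t³ + o(t³) as t → 0⁺ with τ₁ > 0; define the kernel average I_F(h) := (∫₀^R u^{d−1} K(u) F(hu) du)/m_{K,d}. Then the relative bias (I_F(h) − F(B₂^{1/2} h)) / F(B₂^{1/2}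 h) converges, as h → 0⁺, to (B₁ − B₂^{1/2}) / B₂^{1/2}. -/
/-!
Since `F t / t → τ₁` as `t → 0⁺`, the bound `|F t| ≤ C t` holds near `0`, and dominated
convergence gives `I_F(h) / h → τ₁ B₁`, while `F(B₂^{1/2} h) / h → τ₁ B₂^{1/2}`.
Dividing numerator and denominator of the relative bias by `h` gives the limit.
-/

open MeasureTheory Filter Topology Asymptotics Set

theorem tendsto_div_self_of_isLittleO_cubic {F : ℝ → ℝ} {τ₁ τ₂ τ₃ : ℝ}
    (hF : (fun t => F t - (τ₁ * t + τ₂ * t ^ 2 + τ₃ * t ^ 3))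
      =o[𝓝[>] (0:ℝ)] fun t => t ^ 3) :
    Tendsto (fun t => F t / t) (𝓝[>] 0) (𝓝 τ₁) := by
  have hpow : ∀ n, 1 < n → (fun t : ℝ => t ^ n) =o[𝓝[>] 0] fun t => t := fun n hn => by
    simpa using (isLittleO_pow_pow hn).mono nhdsWithin_le_nhds
  have hlin : (fun t => F t - τ₁ * t) =o[𝓝[>] 0] fun t => t := by
    refine ((hF.trans (hpow 3 (by norm_num))).add
      (((hpow 2 (by norm_num)).const_mul_left τ₂).add
        ((hpow 3 (by norm_num)).const_mul_left τ₃))).congr_left fun t => ?_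
    ring
  refine (hlin.tendsto_div_nhds_zero.add_const τ₁).congr' ?_ |>.mono_right (by rw [zero_add])
  filter_upwards [self_mem_nhdsWithin] with t (ht : 0 < t)
  field_simp
  ring

theorem tendsto_comp_const_mul_div {F : ℝ → ℝ} {L a : ℝ}
    (hF : Tendsto (fun t => F t / t) (𝓝[>] 0) (𝓝 L)) (ha : 0 < a) :
    Tendsto (fun h => F (a * h) / h) (𝓝[>] 0) (𝓝 (L * a)) := by
  have hmap : Tendsto (a * ·) (𝓝[>] (0:ℝ)) (𝓝[>] 0) :=
    tendsto_iff_comap.2 (comap_mulLeft_nhdsGT_zero ha).ge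
  refine ((hF.comp hmap).mul_const a).congr' ?_
  filter_upwards [self_mem_nhdsWithin] with h (hh : 0 < h)
  simp only [Function.comp_apply]
  field_simp

theorem integrableOn_pow_mul_Ioc {f : ℝ → ℝ} {R : ℝ} (hf : IntegrableOn f (Ioc 0 R))
    (n : ℕ) : IntegrableOn (fun s => s ^ n * f s) (Ioc 0 R) :=
  hf.continuousOn_mul_of_subset (continuous_pow n).continuousOn isCompact_Icc measurableSet_Ioc
    Ioc_subset_Icc_self

theorem setIntegral_pow_mul_pos {f : ℝ → ℝ} {R : ℝ} (hf : 0 < ∫ s in Ioc 0 R, f s)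
    (hf₀ : ∀ s ∈ Ioc 0 R, 0 ≤ f s) (n : ℕ) : 0 < ∫ s in Ioc 0 R, s ^ n * f s := by
  have hfi : IntegrableOn f (Ioc 0 R) := Integrable.of_integral_ne_zero hf.ne'
  have hpow₀ : ∀ s ∈ Ioc 0 R, 0 ≤ s ^ n * f s := fun s hs =>
    mul_nonneg (pow_nonneg hs.1.le n) (hf₀ s hs)
  have hsupp : (Function.support fun s => s ^ n * f s) ∩ Ioc 0 R =
      Function.support f ∩ Ioc 0 R := by
    ext s
    simp only [mem_inter_iff, Function.mem_support, and_congr_left_iff]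
    intro hs
    simp [hs.1.ne']
  rw [setIntegral_pos_iff_support_of_nonneg_ae
    (ae_restrict_of_forall_mem measurableSet_Ioc hf₀) hfi] at hf
  rwa [setIntegral_pos_iff_support_of_nonneg_ae
    (ae_restrict_of_forall_mem measurableSet_Ioc hpow₀) (integrableOn_pow_mul_Ioc hfi n), hsupp]

theorem tendsto_sub_div_of_tendsto_div_self {f g : ℝ → ℝ} {a b : ℝ}
    (hf : Tendsto (fun h => f h / h) (𝓝[>] 0) (𝓝 a))
    (hg : Tendsto (fun h => g h / h) (𝓝[>] 0) (𝓝 b)) (hb : b ≠ 0) :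
    Tendsto (fun h => (f h - g h) / g h) (𝓝[>] 0) (𝓝 ((a - b) / b)) := by
  refine ((hf.sub hg).div hg hb).congr' ?_
  filter_upwards [self_mem_nhdsWithin] with h (hh : 0 < h)
  simp only [Pi.div_apply, div_sub_div_same, div_div_div_cancel_right₀ hh.ne']

theorem tendsto_setIntegral_mul_comp_div {g F : ℝ → ℝ} {R L : ℝ}
    (hg : IntegrableOn g (Ioc 0 R)) (hF : ContinuousOn F (Ioi 0))
    (hFL : Tendsto (fun t => F t / t) (𝓝[>] 0) (𝓝 L)) :
    Tendsto (fun h => (∫ u in Ioc 0 R, g u * F (h * u)) / h) (𝓝[>] 0)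
      (𝓝 (L * ∫ u in Ioc 0 R, u * g u)) := by
  obtain ⟨δ, hδ, hbound⟩ : ∃ δ > 0, Ioo 0 δ ⊆ {t | ‖F t / t‖ < ‖L‖ + 1} :=
    mem_nhdsGT_iff_exists_Ioo_subset.1 (hFL.norm.eventually (gt_mem_nhds (lt_add_one _)))
  have hsmall : ∀ᶠ h in 𝓝[>] (0:ℝ), h * R < δ := by
    have : Tendsto (fun h : ℝ => h * R) (𝓝[>] 0) (𝓝 0) := by
      simpa using ((continuous_mul_const R).tendsto 0).mono_left nhdsWithin_le_nhds
    exact this.eventually (gt_mem_nhds hδ)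
  have hlim : Tendsto (fun h => ∫ u in Ioc 0 R, g u * (F (h * u) / h)) (𝓝[>] 0)
      (𝓝 (∫ u in Ioc 0 R, g u * (L * u))) := by
    refine tendsto_integral_filter_of_dominated_convergence (fun u => (‖L‖ + 1) * R * ‖g u‖)
      ?_ ?_ (hg.norm.const_mul _) ?_
    · filter_upwards [self_mem_nhdsWithin] with h (hh : 0 < h)
      refine hg.aestronglyMeasurable.mul (ContinuousOn.aestronglyMeasurable ?_ measurableSet_Ioc)
      exact (hF.comp (continuousOn_const.mul continuousOn_id)
        fun u hu => mul_pos hh hu.1).div_const h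
    · filter_upwards [self_mem_nhdsWithin, hsmall] with h (hh : 0 < h) hhR
      refine ae_restrict_of_forall_mem measurableSet_Ioc fun u hu => ?_
      have hhu : h * u ∈ Ioo 0 δ :=
        ⟨mul_pos hh hu.1, (mul_le_mul_of_nonneg_left hu.2 hh.le).trans_lt hhR⟩
      calc ‖g u * (F (h * u) / h)‖ = ‖F (h * u) / (h * u)‖ * u * ‖g u‖ := by
            rw [norm_mul, norm_div, norm_div, norm_mul, Real.norm_of_nonneg hh.le,
              Real.norm_of_nonneg hu.1.le]
            field_simp [hu.1.ne']
        _ ≤ (‖L‖ + 1) * R * ‖g u‖ := by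
            gcongr
            exacts [hu.1.le, (hbound hhu).le, hu.2]
    · refine ae_restrict_of_forall_mem measurableSet_Ioc fun u hu => ?_
      exact ((tendsto_comp_const_mul_div hFL hu.1).const_mul (g u)).congr fun h => by
        rw [mul_comm u h]
  convert hlim using 1
  · ext h
    rw [← integral_div]
    simp only [mul_div_assoc]
  · rw [← integral_const_mul]
    congr 2 with u
    ring

theorem stmt_10_general (d : ℕ) (hd : 1 ≤ d) (R : ℝ) (hR : 0 < R)
    (K : ℝ → ℝ) (hKnonneg : ∀ s, 0 ≤ K s)
    (mK : ℕ → ℝ) (hmK : ∀ j, mK j = ∫ s in (0:ℝ)..R, s ^ (j - 1) * K s)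
    (hmKd : 0 < mK d)
    (B : ℕ → ℝ) (hB : ∀ p, B p = mK (d + p) / mK d)
    (F : ℝ → ℝ) (hFcont : ContinuousOn F (Set.Ici 0))
    (τ₁ τ₂ τ₃ : ℝ) (hτ₁ : 0 < τ₁)
    (hF : (fun t => F t - (τ₁ * t + τ₂ * t ^ 2 + τ₃ * t ^ 3))
      =o[𝓝[>] (0:ℝ)] fun t => t ^ 3)
    (IF : ℝ → ℝ)
    (hIF : ∀ h, IF h = (∫ u in (0:ℝ)..R, u ^ (d - 1) * K u * F (h * u)) / mK d) :
    Tendsto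
      (fun h => (IF h - F (Real.sqrt (B 2) * h)) / F (Real.sqrt (B 2) * h))
      (𝓝[>] (0:ℝ)) (𝓝 ((B 1 - Real.sqrt (B 2)) / Real.sqrt (B 2))) := by
  set g : ℝ → ℝ := fun s => s ^ (d - 1) * K s
  have hmoment : ∀ p, mK (d + p) = ∫ s in Ioc 0 R, s ^ p * g s := fun p => by
    rw [hmK, intervalIntegral.integral_of_le hR.le]
    congr 1 with s
    rw [← mul_assoc, ← pow_add]
    congr 2
    omega
  have hmKd' : mK d = ∫ s in Ioc 0 R, g s := by simpa using hmoment 0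
  -- A non-integrable function has integral `0`, so `mK d ≠ 0` makes `g` integrable.
  have hg : IntegrableOn g (Ioc 0 R) := .of_integral_ne_zero (hmKd' ▸ hmKd.ne')
  have hFτ := tendsto_div_self_of_isLittleO_cubic hF
  have hc : 0 < √(B 2) := by
    rw [hB, hmoment]
    refine Real.sqrt_pos.2 (div_pos (setIntegral_pow_mul_pos (hmKd' ▸ hmKd) ?_ 2) hmKd)
    exact fun s hs => mul_nonneg (pow_nonneg hs.1.le _) (hKnonneg s)
  have hnum : Tendsto (fun h => IF h / h) (𝓝[>] 0) (𝓝 (τ₁ * B 1)) := by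
    convert (tendsto_setIntegral_mul_comp_div hg (hFcont.mono Ioi_subset_Ici_self) hFτ).div_const
      (mK d) using 2 with h
    · rw [hIF, intervalIntegral.integral_of_le hR.le, div_right_comm]
    · rw [hB, hmoment 1, mul_div_assoc]
      simp
  convert tendsto_sub_div_of_tendsto_div_self hnum (tendsto_comp_const_mul_div hFτ hc)
    (by positivity) using 2
  rw [← mul_sub, mul_div_mul_left _ _ hτ₁.ne']

/-- Mean relative error of the gradient constraint estimator in the continuous
(non-differentiable) case: the relative bias
`(I_F(h) − F(B₂^{1/2} h)) / F(B₂^{1/2} h)` converges, as `h → 0⁺`, to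
`(B₁ − B₂^{1/2}) / B₂^{1/2}`. -/
theorem stmt_10 (d : ℕ) (hd : 1 ≤ d) (R : ℝ) (hR : 0 < R)
    (K : ℝ → ℝ) (hKmeas : Measurable K) (hKnonneg : ∀ s, 0 ≤ K s)
    (hKbdd : ∃ M, ∀ s, K s ≤ M)
    (hKsupp : ∀ s, R < s → K s = 0)
    (mK : ℕ → ℝ) (hmK : ∀ j, mK j = ∫ s in (0:ℝ)..R, s ^ (j - 1) * K s)
    (hmKd : 0 < mK d)
    (B : ℕ → ℝ) (hB : ∀ p, B p = mK (d + p) / mK d)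
    (F : ℝ → ℝ) (hFcont : ContinuousOn F (Set.Ici 0))
    (hF0 : F 0 = 0)
    (hFpos : ∃ ε > 0, ∀ t : ℝ, 0 < t → t < ε → 0 < F t)
    (τ₁ τ₂ τ₃ : ℝ) (hτ₁ : 0 < τ₁)
    (hF : (fun t => F t - (τ₁ * t + τ₂ * t ^ 2 + τ₃ * t ^ 3))
      =o[𝓝[>] (0:ℝ)] fun t => t ^ 3)
    (IF : ℝ → ℝ)
    (hIF : ∀ h, IF h = (∫ u in (0:ℝ)..R, u ^ (d - 1) * K u * F (h * u)) / mK d) :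
    Tendsto
      (fun h => (IF h - F (Real.sqrt (B 2) * h)) / F (Real.sqrt (B 2) * h))
      (𝓝[>] (0:ℝ)) (𝓝 ((B 1 - Real.sqrt (B 2)) / Real.sqrt (B 2))) :=
  stmt_10_general d hd R hR K hKnonneg mK hmK hmKd B hB F hFcont τ₁ τ₂ τ₃ hτ₁ hF IF hIF
end

section
/- Let d ≥ 1 be an integer, R > 0, and let K : [0,∞) → ℝ be a bounded, nonnegative, measurable function supported in [0,R]. For j ≥ 1 set m_{K,j} := ∫₀^R s^{j−1} K(s) ds and assume m_{K,d} > 0; define the kernel moment ratios B_p := m_{K,d+p}/m_{K,d}. Set c₁ᵈ = 2d, c₂ᵈ = 8d², c₃ᵈ = 4d(d−1), and c₅ᵈ = c₂ᵈ − 2√2 c₃ᵈ − 8 c₁ᵈ. Let F : [0,∞) → ℝ be continuous with F(t) = τ₁ t + τ₂ t² + τ₃ t³ + o(t³) as t → 0⁺, define I_F(h) := (∫₀^R u^{d−1} K(u) F(hu) du)/m_{K,d}, Ψ_F(h) := c₂ᵈ I_F(h) − c₃ᵈ I_F(√2 h) − c₁ᵈ I_F(2h), and φ₂(a) := c₂ᵈ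 F(a) − c₃ᵈ F(√2 a) − c₁ᵈ F(2a). Then, as h → 0⁺, Ψ_F(h) − φ₂(B₁ h) = c₅ᵈ τ₃ (B₃ − B₁³) h³ + o(h³). -/
/-!
Write `F = P + E` with `P t = τ₁ t + τ₂ t² + τ₃ t³` and `E = o(t³)`. Integrating `P (h u)` against
the weight `u^(d-1) K(u) / m_{K,d}` turns each `t^k` into `B_k h^k`, while the `E`-part of the
integral is still `o(h³)` because the weight has finite mass. Comparing with `φ₂(B₁ h)`, the
linear terms agree exactly, the quadratic ones cancel since `c₂ = 2 c₃ + 4 c₁`, and the cubic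
ones leave `c₅ τ₃ (B₃ - B₁³) h³`.
-/

open MeasureTheory Filter Topology Asymptotics

namespace Asymptotics.IsLittleO

variable {E : ℝ → ℝ} {n : ℕ}

theorem comp_mul_left_of_pos (hE : E =o[𝓝[>] 0] (· ^ n)) {c : ℝ} (hc : 0 < c) :
    (fun t => E (c * t)) =o[𝓝[>] 0] (· ^ n) := by
  have hmap : Tendsto (c * ·) (𝓝[>] (0 : ℝ)) (𝓝[>] 0) :=
    tendsto_comap.mono_left (comap_mulLeft_nhdsGT_zero hc).ge
  refine (hE.comp_tendsto hmap).trans_isBigO ?_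
  simpa only [Function.comp_def, mul_pow] using isBigO_const_mul_self (c ^ n) (· ^ n) _

theorem comp_mul_left_of_nonneg (hE : E =o[𝓝[>] 0] (· ^ n)) (hE0 : E 0 = 0) {c : ℝ}
    (hc : 0 ≤ c) : (fun t => E (c * t)) =o[𝓝[>] 0] (· ^ n) := by
  rcases hc.eq_or_lt with rfl | hc
  · simpa only [zero_mul, hE0] using isLittleO_zero (· ^ n) _
  · exact hE.comp_mul_left_of_pos hc

theorem apply_zero_eq_zero (hE : E =o[𝓝[>] 0] (· ^ n)) (hn : n ≠ 0)
    (hcont : ContinuousWithinAt E (Set.Ioi 0) 0) : E 0 = 0 :=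
  tendsto_nhds_unique hcont <| hE.trans_tendsto <|
    ((continuous_pow n).tendsto' 0 0 (zero_pow hn)).mono_left nhdsWithin_le_nhds

end Asymptotics.IsLittleO

theorem isLittleO_integral_mul_comp_mul {w E : ℝ → ℝ} {R : ℝ} {n : ℕ} (hR : 0 ≤ R)
    (hw : IntervalIntegrable w volume 0 R) (hE : E =o[𝓝[>] 0] (· ^ n)) :
    (fun h => ∫ u in (0:ℝ)..R, w u * E (h * u)) =o[𝓝[>] 0] (· ^ n) := by
  set C := R ^ n * ∫ u in (0:ℝ)..R, ‖w u‖
  have hC : 0 ≤ C := mul_nonneg (pow_nonneg hR n)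
    (intervalIntegral.integral_nonneg hR fun u _ => norm_nonneg _)
  refine isLittleO_iff.mpr fun ε hε => ?_
  set ε' := ε / (C + 1)
  obtain ⟨δ, hδ, hEδ⟩ := mem_nhdsGT_iff_exists_Ioo_subset.mp
    (isLittleO_iff.mp hE (by positivity : 0 < ε'))
  filter_upwards [Ioo_mem_nhdsGT (div_pos hδ (by linarith) : 0 < δ / (R + 1))] with h ⟨hh0, hhδ⟩
  have hbound : ∀ u ∈ Set.Ioc 0 R, ‖w u * E (h * u)‖ ≤ ε' * R ^ n * h ^ n * ‖w u‖ := by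
    rintro u ⟨hu0, huR⟩
    have hhu : h * u ≤ h * R := mul_le_mul_of_nonneg_left huR hh0.le
    have hhR : h * (R + 1) < δ := (lt_div_iff₀ (by linarith)).mp hhδ
    have hEhu : ‖E (h * u)‖ ≤ ε' * (h * u) ^ n := by
      simpa [abs_of_pos (mul_pos hh0 hu0)] using hEδ ⟨mul_pos hh0 hu0, by nlinarith⟩
    calc ‖w u * E (h * u)‖ ≤ ‖w u‖ * (ε' * (h * R) ^ n) := by
          rw [norm_mul]
          gcongr
          exact hEhu.trans (by gcongr)
      _ = ε' * R ^ n * h ^ n * ‖w u‖ := by ring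
  calc ‖∫ u in (0:ℝ)..R, w u * E (h * u)‖
      ≤ ∫ u in (0:ℝ)..R, ε' * R ^ n * h ^ n * ‖w u‖ :=
        intervalIntegral.norm_integral_le_of_norm_le hR (ae_of_all _ hbound)
          (hw.norm.const_mul _)
    _ = ε * (C / (C + 1)) * h ^ n := by
        rw [intervalIntegral.integral_const_mul]; ring
    _ ≤ ε * ‖h ^ n‖ := by
        rw [norm_pow, Real.norm_of_nonneg hh0.le]
        gcongr
        exact mul_le_of_le_one_right hε.le ((div_le_one (by positivity)).mpr (by linarith))

noncomputable def curvatureComb (c₁ c₂ c₃ : ℝ) (G : ℝ → ℝ) (h : ℝ) : ℝ :=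
  c₂ * G h - c₃ * G (Real.sqrt 2 * h) - c₁ * G (2 * h)

theorem Asymptotics.IsLittleO.curvatureComb {G : ℝ → ℝ} {n : ℕ}
    (hG : G =o[𝓝[>] 0] (· ^ n)) (c₁ c₂ c₃ : ℝ) :
    curvatureComb c₁ c₂ c₃ G =o[𝓝[>] 0] (· ^ n) :=
  ((hG.const_mul_left c₂).sub
    ((hG.comp_mul_left_of_pos (by positivity)).const_mul_left c₃)).sub
    ((hG.comp_mul_left_of_pos two_pos).const_mul_left c₁)

theorem curvatureComb_congr {c₁ c₂ c₃ : ℝ} {G₁ G₂ : ℝ → ℝ} (hG : Set.EqOn G₁ G₂ (Set.Ici 0))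
    {h : ℝ} (hh : 0 ≤ h) : curvatureComb c₁ c₂ c₃ G₁ h = curvatureComb c₁ c₂ c₃ G₂ h := by
  simp only [curvatureComb, hG (Set.mem_Ici.mpr hh),
    hG (Set.mem_Ici.mpr (by positivity : 0 ≤ Real.sqrt 2 * h)),
    hG (Set.mem_Ici.mpr (by positivity : 0 ≤ 2 * h))]

theorem curvatureComb_cubic_add_sub {c₁ c₂ c₃ : ℝ} (hquad : c₂ - 2 * c₃ - 4 * c₁ = 0)
    (τ₁ τ₂ τ₃ B₁ B₂ B₃ : ℝ) (G H : ℝ → ℝ) (h : ℝ) :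
    curvatureComb c₁ c₂ c₃ (fun a => τ₁ * B₁ * a + τ₂ * B₂ * a ^ 2 + τ₃ * B₃ * a ^ 3 + G a) h
      - curvatureComb c₁ c₂ c₃ (fun t => τ₁ * t + τ₂ * t ^ 2 + τ₃ * t ^ 3 + H t) (B₁ * h)
      = (c₂ - 2 * Real.sqrt 2 * c₃ - 8 * c₁) * τ₃ * (B₃ - B₁ ^ 3) * h ^ 3
        + (curvatureComb c₁ c₂ c₃ G h - curvatureComb c₁ c₂ c₃ H (B₁ * h)) := by
  have hs2 : Real.sqrt 2 ^ 2 = 2 := Real.sq_sqrt zero_le_two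
  simp only [curvatureComb]
  linear_combination (τ₂ * h ^ 2 * (B₂ - B₁ ^ 2)) * hquad - (c₃ * (τ₂ * h ^ 2 * (B₂ - B₁ ^ 2) +
      Real.sqrt 2 * τ₃ * h ^ 3 * (B₃ - B₁ ^ 3))) * hs2

theorem intervalIntegrable_pow_mul_of_bounded {K : ℝ → ℝ} (hK : Measurable K) (hK0 : ∀ s, 0 ≤ K s)
    {M : ℝ} (hM : ∀ s, K s ≤ M) (k : ℕ) (a b : ℝ) :
    IntervalIntegrable (fun u => u ^ k * K u) volume a b := by
  refine IntervalIntegrable.continuousOn_mul ?_ (by fun_prop)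
  refine (Measure.integrableOn_of_bounded (M := M) isCompact_uIcc.measure_lt_top.ne
    hK.aestronglyMeasurable (ae_of_all _ fun s => ?_)).intervalIntegrable
  rw [Real.norm_of_nonneg (hK0 s)]
  exact hM s

theorem intervalIntegral.integral_mul_cubic_comp_mul_add {w g : ℝ → ℝ} {a b : ℝ}
    (hw : IntervalIntegrable w volume a b) (hg : ContinuousOn g (Set.uIcc a b))
    (c τ₁ τ₂ τ₃ : ℝ) :
    ∫ u in a..b, w u * (τ₁ * (c * u) + τ₂ * (c * u) ^ 2 + τ₃ * (c * u) ^ 3 + g u) =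
      τ₁ * c * (∫ u in a..b, w u * u ^ 1) + τ₂ * c ^ 2 * (∫ u in a..b, w u * u ^ 2)
        + τ₃ * c ^ 3 * (∫ u in a..b, w u * u ^ 3) + ∫ u in a..b, w u * g u := by
  have hint (p : ℕ) : IntervalIntegrable (fun u => w u * u ^ p) volume a b :=
    hw.mul_continuousOn (by fun_prop)
  have I1 := (hint 1).const_mul (τ₁ * c)
  have I2 := (hint 2).const_mul (τ₂ * c ^ 2)
  have I3 := (hint 3).const_mul (τ₃ * c ^ 3)
  rw [← intervalIntegral.integral_const_mul, ← intervalIntegral.integral_const_mul,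
    ← intervalIntegral.integral_const_mul, ← integral_add I1 I2, ← integral_add (I1.add I2) I3,
    ← integral_add ((I1.add I2).add I3) (hw.mul_continuousOn hg)]
  congr 1
  ext u
  ring

theorem stmt_14_general (d : ℕ) (hd : 1 ≤ d) (R : ℝ) (hR : 0 < R)
    (K : ℝ → ℝ) (hKmeas : Measurable K) (hKnonneg : ∀ s, 0 ≤ K s)
    (hKbdd : ∃ M, ∀ s, K s ≤ M)
    (mK : ℕ → ℝ) (hmK : ∀ j, mK j = ∫ s in (0:ℝ)..R, s ^ (j - 1) * K s)
    (hmKd : 0 < mK d)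
    (B : ℕ → ℝ) (hB : ∀ p, B p = mK (d + p) / mK d)
    (c1 c2 c3 c5 : ℝ) (hc1 : c1 = 2 * (d : ℝ)) (hc2 : c2 = 8 * (d : ℝ) ^ 2)
    (hc3 : c3 = 4 * (d : ℝ) * ((d : ℝ) - 1))
    (hc5 : c5 = c2 - 2 * Real.sqrt 2 * c3 - 8 * c1)
    (F : ℝ → ℝ) (hFcont : ContinuousOn F (Set.Ici 0))
    (τ₁ τ₂ τ₃ : ℝ)
    (hF : (fun t => F t - (τ₁ * t + τ₂ * t ^ 2 + τ₃ * t ^ 3))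
      =o[𝓝[>] (0:ℝ)] fun t => t ^ 3)
    (IF : ℝ → ℝ)
    (hIF : ∀ h, IF h = (∫ u in (0:ℝ)..R, u ^ (d - 1) * K u * F (h * u)) / mK d)
    (Ψ : ℝ → ℝ)
    (hΨ : ∀ h, Ψ h = c2 * IF h - c3 * IF (Real.sqrt 2 * h) - c1 * IF (2 * h))
    (φ₂ : ℝ → ℝ)
    (hφ₂ : ∀ a, φ₂ a = c2 * F a - c3 * F (Real.sqrt 2 * a) - c1 * F (2 * a)) :
    (fun h => Ψ h - φ₂ (B 1 * h) - c5 * τ₃ * (B 3 - (B 1) ^ 3) * h ^ 3)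
      =o[𝓝[>] (0:ℝ)] fun h => h ^ 3 := by
  obtain ⟨M, hM⟩ := hKbdd
  set E : ℝ → ℝ := fun t => F t - (τ₁ * t + τ₂ * t ^ 2 + τ₃ * t ^ 3)
  have hFE (t : ℝ) : F t = τ₁ * t + τ₂ * t ^ 2 + τ₃ * t ^ 3 + E t := by ring
  have hEcont : ContinuousOn E (Set.Ici 0) := hFcont.sub (by fun_prop)
  have hE0 : E 0 = 0 := hF.apply_zero_eq_zero three_ne_zero
    ((hEcont 0 Set.self_mem_Ici).mono Set.Ioi_subset_Ici_self)
  have hw := intervalIntegrable_pow_mul_of_bounded hKmeas hKnonneg hM (d - 1) 0 R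
  have hmom (p : ℕ) : ∫ u in (0:ℝ)..R, u ^ (d - 1) * K u * u ^ p = mK (d + p) := by
    rw [hmK]
    congr 1 with u
    rw [mul_right_comm, ← pow_add, show d - 1 + p = d + p - 1 by omega]
  set J : ℝ → ℝ := fun a => (∫ u in (0:ℝ)..R, u ^ (d - 1) * K u * E (a * u)) / mK d
  have hIF_eq : Set.EqOn IF
      (fun a => τ₁ * B 1 * a + τ₂ * B 2 * a ^ 2 + τ₃ * B 3 * a ^ 3 + J a) (Set.Ici 0) := by
    intro a (ha : 0 ≤ a)
    have hEa : ContinuousOn (fun u => E (a * u)) (Set.uIcc 0 R) :=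
      hEcont.comp (by fun_prop) fun u hu => mul_nonneg ha (Set.uIcc_of_le hR.le ▸ hu).1
    simp only [hIF, hFE, J, hB]
    rw [intervalIntegral.integral_mul_cubic_comp_mul_add hw hEa, hmom, hmom, hmom]
    field_simp
  have hJ : J =o[𝓝[>] 0] (· ^ 3) :=
    ((isLittleO_integral_mul_comp_mul hR.le hw hF).const_mul_left (mK d)⁻¹).congr_left
      fun _ => inv_mul_eq_div _ _
  have hB1 : 0 ≤ B 1 := by
    rw [hB, hmK]
    exact div_nonneg (intervalIntegral.integral_nonneg hR.le fun u hu =>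
      mul_nonneg (pow_nonneg hu.1 _) (hKnonneg u)) hmKd.le
  have hrem := (hJ.curvatureComb c1 c2 c3).sub
    ((hF.curvatureComb c1 c2 c3).comp_mul_left_of_nonneg (by simp [curvatureComb, hE0]) hB1)
  refine hrem.congr' ?_ EventuallyEq.rfl
  filter_upwards [self_mem_nhdsWithin] with h (hh : 0 < h)
  have hΨ_eq : Ψ h = curvatureComb c1 c2 c3 IF h := hΨ h
  have hφ₂_eq : φ₂ (B 1 * h) = curvatureComb c1 c2 c3
      (fun t => τ₁ * t + τ₂ * t ^ 2 + τ₃ * t ^ 3 + E t) (B 1 * h) := by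
    simp only [hφ₂, curvatureComb, ← hFE]
  rw [hΨ_eq, hφ₂_eq, curvatureComb_congr hIF_eq hh.le,
    curvatureComb_cubic_add_sub (by rw [hc1, hc2, hc3]; ring), hc5]
  ring

/-- Mean of the sample curvature constraint, continuous (non-differentiable) case,
unbiasedness at the modified step `a₂' = B₁ h`:
`Ψ_F(h) − φ₂(B₁ h) = c₅ᵈ τ₃ (B₃ − B₁³) h³ + o(h³)` as `h → 0⁺`. -/
theorem stmt_14 (d : ℕ) (hd : 1 ≤ d) (R : ℝ) (hR : 0 < R)
    (K : ℝ → ℝ) (hKmeas : Measurable K) (hKnonneg : ∀ s, 0 ≤ K s)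
    (hKbdd : ∃ M, ∀ s, K s ≤ M)
    (hKsupp : ∀ s, R < s → K s = 0)
    (mK : ℕ → ℝ) (hmK : ∀ j, mK j = ∫ s in (0:ℝ)..R, s ^ (j - 1) * K s)
    (hmKd : 0 < mK d)
    (B : ℕ → ℝ) (hB : ∀ p, B p = mK (d + p) / mK d)
    (c1 c2 c3 c5 : ℝ) (hc1 : c1 = 2 * (d : ℝ)) (hc2 : c2 = 8 * (d : ℝ) ^ 2)
    (hc3 : c3 = 4 * (d : ℝ) * ((d : ℝ) - 1))
    (hc5 : c5 = c2 - 2 * Real.sqrt 2 * c3 - 8 * c1)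
    (F : ℝ → ℝ) (hFcont : ContinuousOn F (Set.Ici 0))
    (τ₁ τ₂ τ₃ : ℝ)
    (hF : (fun t => F t - (τ₁ * t + τ₂ * t ^ 2 + τ₃ * t ^ 3))
      =o[𝓝[>] (0:ℝ)] fun t => t ^ 3)
    (IF : ℝ → ℝ)
    (hIF : ∀ h, IF h = (∫ u in (0:ℝ)..R, u ^ (d - 1) * K u * F (h * u)) / mK d)
    (Ψ : ℝ → ℝ)
    (hΨ : ∀ h, Ψ h = c2 * IF h - c3 * IF (Real.sqrt 2 * h) - c1 * IF (2 * h))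
    (φ₂ : ℝ → ℝ)
    (hφ₂ : ∀ a, φ₂ a = c2 * F a - c3 * F (Real.sqrt 2 * a) - c1 * F (2 * a)) :
    (fun h => Ψ h - φ₂ (B 1 * h) - c5 * τ₃ * (B 3 - (B 1) ^ 3) * h ^ 3)
      =o[𝓝[>] (0:ℝ)] fun h => h ^ 3 :=
  stmt_14_general d hd R hR K hKmeas hKnonneg hKbdd mK hmK hmKd B hB c1 c2 c3 c5 hc1 hc2 hc3 hc5 F
    hFcont τ₁ τ₂ τ₃ hF IF hIF Ψ hΨ φ₂ hφ₂
end

section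
/- Let d ≥ 1 be an integer, R > 0, and let K : [0,∞) → ℝ be a bounded, nonnegative, measurable function supported in [0,R]. For j ≥ 1 set m_{K,j} := ∫₀^R s^{j−1} K(s) ds and assume m_{K,d} > 0; define the kernel moment ratios B_p := m_{K,d+p}/m_{K,d}. Set c₁ᵈ = 2d, c₂ᵈ = 8d², c₃ᵈ = 4d(d−1), c₄ᵈ = c₂ᵈ − √2 c₃ᵈ − 2 c₁ᵈ, and c₅ᵈ = c₂ᵈ − 2√2 c₃ᵈ − 8 c₁ᵈ. Let F : [0,∞) → ℝ be continuous with F(t) = τ₁ t + τ₂ t² + τ₃ t³ + o(t³) as t → 0⁺, define I_F(h) := (∫₀^R u^{d−1} K(u) F(hu) du)/m_{K,d}, Ψ_F(h) := c₂ᵈ I_F(h) − c₃ᵈ I_F(√2 h) − c₁ᵈ I_F(2h), and φ₂(a) := c₂ᵈ F(a) − c₃ᵈ F(√2 a) − c₁ᵈ F(2a). Then, as h → 0⁺, Ψ_F(h) − φ₂(B₄^{1/4} h) = c₄ᵈ τ₁ (B₁ − B₄^{1/4}) h + c₅ᵈ τ₃ (B₃ − B₄^{3/4}) h³ + o(h³).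 -/
open MeasureTheory Filter Topology Asymptotics

/-- A bounded a.e.-strongly-measurable function is interval integrable. -/
lemma aux_ii_of_bdd (R : ℝ) (hR : 0 ≤ R) (g : ℝ → ℝ)
    (hm : AEStronglyMeasurable g (volume.restrict (Set.Ioc 0 R)))
    (C : ℝ) (hC : ∀ u ∈ Set.Ioc (0:ℝ) R, ‖g u‖ ≤ C) :
    IntervalIntegrable g volume 0 R := by
  rw [intervalIntegrable_iff_integrableOn_Ioc_of_le hR]
  refine ⟨hm, ?_⟩
  apply MeasureTheory.HasFiniteIntegral.of_bounded (C := C)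
  filter_upwards [ae_restrict_mem measurableSet_Ioc] with u hu
  exact hC u hu

/-- Mean of the sample curvature constraint, continuous (non-differentiable) case,
bias at the consistency-principle step `a₂ = B₄^{1/4} h`:
`Ψ_F(h) − φ₂(B₄^{1/4} h) = c₄ᵈ τ₁ (B₁ − B₄^{1/4}) h + c₅ᵈ τ₃ (B₃ − B₄^{3/4}) h³ + o(h³)`
as `h → 0⁺`. -/
theorem stmt_15 (d : ℕ) (hd : 1 ≤ d) (R : ℝ) (hR : 0 < R)
    (K : ℝ → ℝ) (hKmeas : Measurable K) (hKnonneg : ∀ s, 0 ≤ K s)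
    (hKbdd : ∃ M, ∀ s, K s ≤ M)
    (hKsupp : ∀ s, R < s → K s = 0)
    (mK : ℕ → ℝ) (hmK : ∀ j, mK j = ∫ s in (0:ℝ)..R, s ^ (j - 1) * K s)
    (hmKd : 0 < mK d)
    (B : ℕ → ℝ) (hB : ∀ p, B p = mK (d + p) / mK d)
    (c1 c2 c3 c4 c5 : ℝ) (hc1 : c1 = 2 * (d : ℝ)) (hc2 : c2 = 8 * (d : ℝ) ^ 2)
    (hc3 : c3 = 4 * (d : ℝ) * ((d : ℝ) - 1))
    (hc4 : c4 = c2 - Real.sqrt 2 * c3 - 2 * c1)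
    (hc5 : c5 = c2 - 2 * Real.sqrt 2 * c3 - 8 * c1)
    (F : ℝ → ℝ) (hFcont : ContinuousOn F (Set.Ici 0))
    (τ₁ τ₂ τ₃ : ℝ)
    (hF : (fun t => F t - (τ₁ * t + τ₂ * t ^ 2 + τ₃ * t ^ 3))
      =o[𝓝[>] (0:ℝ)] fun t => t ^ 3)
    (IF : ℝ → ℝ)
    (hIF : ∀ h, IF h = (∫ u in (0:ℝ)..R, u ^ (d - 1) * K u * F (h * u)) / mK d)
    (Ψ : ℝ → ℝ)
    (hΨ : ∀ h, Ψ h = c2 * IF h - c3 * IF (Real.sqrt 2 * h) - c1 * IF (2 * h))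
    (φ₂ : ℝ → ℝ)
    (hφ₂ : ∀ a, φ₂ a = c2 * F a - c3 * F (Real.sqrt 2 * a) - c1 * F (2 * a)) :
    (fun h => Ψ h - φ₂ ((B 4) ^ ((1:ℝ)/4) * h)
        - (c4 * τ₁ * (B 1 - (B 4) ^ ((1:ℝ)/4)) * h
          + c5 * τ₃ * (B 3 - (B 4) ^ ((3:ℝ)/4)) * h ^ 3))
      =o[𝓝[>] (0:ℝ)] fun h => h ^ 3 := by
  obtain ⟨M, hM⟩ := hKbdd
  have hM0 : 0 ≤ M := le_trans (hKnonneg 0) (hM 0)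
  have hRR : (0:ℝ) ≤ R := hR.le
  -- basic integrability of moments
  have L1 : ∀ j : ℕ, IntervalIntegrable (fun u => u ^ j * K u) volume 0 R := by
    intro j
    refine aux_ii_of_bdd R hRR _ ((measurable_id.pow_const j).mul hKmeas).aestronglyMeasurable.restrict
      (R ^ j * M) ?_
    intro u hu
    have h0u : (0:ℝ) ≤ u := hu.1.le
    have : |u ^ j * K u| = u ^ j * K u := abs_of_nonneg (mul_nonneg (pow_nonneg h0u j) (hKnonneg u))
    rw [Real.norm_eq_abs, this]
    exact mul_le_mul (pow_le_pow_left₀ h0u hu.2 j) (hM u) (hKnonneg u) (pow_nonneg hRR j)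
  -- integrability with F
  have L2 : ∀ x : ℝ, 0 ≤ x →
      IntervalIntegrable (fun u => u ^ (d - 1) * K u * F (x * u)) volume 0 R := by
    intro x hx
    have hFc : ContinuousOn (fun u => F (x * u)) (Set.Icc 0 R) := by
      apply hFcont.comp ((continuous_const.mul continuous_id).continuousOn)
      intro u hu
      exact mul_nonneg hx hu.1
    obtain ⟨C, hC⟩ := isCompact_Icc.exists_bound_of_continuousOn hFc
    have hC0 : 0 ≤ C := le_trans (norm_nonneg _) (hC 0 ⟨le_refl 0, hRR⟩)
    refine aux_ii_of_bdd R hRR _ ?_ (R ^ (d - 1) * M * C) ?_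
    · exact (((measurable_id.pow_const (d - 1)).mul hKmeas).aestronglyMeasurable.restrict).mul
        (((hFc.mono Set.Ioc_subset_Icc_self).aestronglyMeasurable measurableSet_Ioc))
    · intro u hu
      have h0u : (0:ℝ) ≤ u := hu.1.le
      rw [Real.norm_eq_abs, abs_mul, abs_of_nonneg (mul_nonneg (pow_nonneg h0u _) (hKnonneg u))]
      have h1 : u ^ (d - 1) * K u ≤ R ^ (d - 1) * M :=
        mul_le_mul (pow_le_pow_left₀ h0u hu.2 _) (hM u) (hKnonneg u) (pow_nonneg hRR _)
      have h2 : |F (x * u)| ≤ C := hC u ⟨h0u, hu.2⟩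
      calc u ^ (d - 1) * K u * |F (x * u)| ≤ R ^ (d - 1) * M * C :=
            mul_le_mul h1 h2 (abs_nonneg _) (mul_nonneg (pow_nonneg hRR _) hM0)
        _ = R ^ (d - 1) * M * C := rfl
  -- the error function E
  set E : ℝ → ℝ := fun t => F t - (τ₁ * t + τ₂ * t ^ 2 + τ₃ * t ^ 3) with hEdef
  have hFpoly : ∀ x, F x = τ₁ * x + τ₂ * x ^ 2 + τ₃ * x ^ 3 + E x := by
    intro x; rw [hEdef]; ring
  -- F 0 = 0
  have hF0 : F 0 = 0 := by
    have ht3 : Tendsto (fun t : ℝ => t ^ 3) (𝓝[>] (0:ℝ)) (𝓝 0) := by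
      have := ((continuous_pow 3).tendsto (0:ℝ)).mono_left (nhdsWithin_le_nhds (s := Set.Ioi (0:ℝ)))
      simpa using this
    have hE : Tendsto E (𝓝[>] (0:ℝ)) (𝓝 0) := hF.isBigO.trans_tendsto ht3
    have hpoly : Tendsto (fun t : ℝ => τ₁ * t + τ₂ * t ^ 2 + τ₃ * t ^ 3) (𝓝[>] (0:ℝ)) (𝓝 0) := by
      have : Continuous (fun t : ℝ => τ₁ * t + τ₂ * t ^ 2 + τ₃ * t ^ 3) := by fun_prop
      have := (this.tendsto (0:ℝ)).mono_left (nhdsWithin_le_nhds (s := Set.Ioi (0:ℝ)))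
      simpa using this
    have hFt : Tendsto F (𝓝[>] (0:ℝ)) (𝓝 0) := by
      have := hE.add hpoly
      simp only [add_zero] at this
      refine this.congr ?_
      intro t; rw [hEdef]; ring
    have hFt2 : Tendsto F (𝓝[>] (0:ℝ)) (𝓝 (F 0)) :=
      (hFcont 0 Set.self_mem_Ici).mono_left (nhdsWithin_mono 0 Set.Ioi_subset_Ici_self)
    exact tendsto_nhds_unique hFt2 hFt
  have hE0 : E 0 = 0 := by rw [hEdef]; simp [hF0]
  -- E is little-o on the closed right neighborhood
  have smallE : E =o[𝓝[Set.Ici (0:ℝ)] 0] (fun t => t ^ 3) := by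
    have : Set.Ici (0:ℝ) = insert 0 (Set.Ioi 0) := (Set.Ioi_insert).symm
    rw [this, nhdsWithin_insert]
    exact IsLittleO.sup (Asymptotics.isLittleO_pure.mpr hE0) hF
  -- scaling lemma
  have scaleo : ∀ f : ℝ → ℝ, f =o[𝓝[Set.Ici (0:ℝ)] 0] (fun t => t ^ 3) → ∀ c : ℝ, 0 ≤ c →
      (fun h => f (c * h)) =o[𝓝[>] (0:ℝ)] (fun h => h ^ 3) := by
    intro f hf c hc
    have ht : Tendsto (fun h : ℝ => c * h) (𝓝[>] (0:ℝ)) (𝓝[Set.Ici (0:ℝ)] 0) := by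
      apply tendsto_nhdsWithin_of_tendsto_nhds_of_eventually_within
      · have hcont : Continuous (fun h : ℝ => c * h) := continuous_const.mul continuous_id
        have := (hcont.tendsto (0:ℝ)).mono_left (nhdsWithin_le_nhds (s := Set.Ioi (0:ℝ)))
        simpa using this
      · filter_upwards [self_mem_nhdsWithin] with t ht
        exact mul_nonneg hc (le_of_lt ht)
    have h1 := hf.comp_tendsto ht
    have h2 : ((fun t => t ^ 3) ∘ fun h : ℝ => c * h) = fun h : ℝ => c ^ 3 * h ^ 3 := by
      funext h; simp [Function.comp]; ring
    rw [h2] at h1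
    exact h1.trans_isBigO ((isBigO_refl (fun h : ℝ => h ^ 3) _).const_mul_left (c ^ 3))
  -- moment positivity facts
  have hmom_nonneg : ∀ j : ℕ, 0 ≤ mK j := by
    intro j
    rw [hmK]
    apply intervalIntegral.integral_nonneg hRR
    intro u hu
    exact mul_nonneg (pow_nonneg hu.1 _) (hKnonneg u)
  -- the remainder integral G
  set G : ℝ → ℝ := fun x => ∫ u in (0:ℝ)..R,
      u ^ (d - 1) * K u * (F (x * u) - (τ₁ * (x * u) + τ₂ * (x * u) ^ 2 + τ₃ * (x * u) ^ 3))
    with hGdef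
  -- pointwise rewriting of the polynomial integrand
  have hι : ∀ x u : ℝ, u ^ (d - 1) * K u * (τ₁ * (x * u) + τ₂ * (x * u) ^ 2 + τ₃ * (x * u) ^ 3)
      = (τ₁ * x) * (u ^ (d + 1 - 1) * K u) + ((τ₂ * x ^ 2) * (u ^ (d + 2 - 1) * K u)
        + (τ₃ * x ^ 3) * (u ^ (d + 3 - 1) * K u)) := by
    intro x u
    have h1 : d + 1 - 1 = (d - 1) + 1 := by omega
    have h2 : d + 2 - 1 = (d - 1) + 2 := by omega
    have h3 : d + 3 - 1 = (d - 1) + 3 := by omega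
    rw [h1, h2, h3, pow_add, pow_add, pow_add]; ring
  have Lpoly : ∀ x : ℝ, IntervalIntegrable
      (fun u => u ^ (d - 1) * K u * (τ₁ * (x * u) + τ₂ * (x * u) ^ 2 + τ₃ * (x * u) ^ 3))
      volume 0 R := by
    intro x
    have : (fun u : ℝ => u ^ (d - 1) * K u * (τ₁ * (x * u) + τ₂ * (x * u) ^ 2 + τ₃ * (x * u) ^ 3))
        = fun u => (τ₁ * x) * (u ^ (d + 1 - 1) * K u) + ((τ₂ * x ^ 2) * (u ^ (d + 2 - 1) * K u)
          + (τ₃ * x ^ 3) * (u ^ (d + 3 - 1) * K u)) := by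
      funext u; exact hι x u
    rw [this]
    exact (((L1 _).const_mul _).add (((L1 _).const_mul _).add ((L1 _).const_mul _)))
  have Lrem : ∀ x : ℝ, 0 ≤ x → IntervalIntegrable
      (fun u => u ^ (d - 1) * K u * (F (x * u) - (τ₁ * (x * u) + τ₂ * (x * u) ^ 2 + τ₃ * (x * u) ^ 3)))
      volume 0 R := by
    intro x hx
    have : (fun u : ℝ => u ^ (d - 1) * K u *
        (F (x * u) - (τ₁ * (x * u) + τ₂ * (x * u) ^ 2 + τ₃ * (x * u) ^ 3)))
        = fun u => u ^ (d - 1) * K u * F (x * u)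
          - u ^ (d - 1) * K u * (τ₁ * (x * u) + τ₂ * (x * u) ^ 2 + τ₃ * (x * u) ^ 3) := by
      funext u; ring
    rw [this]
    exact (L2 x hx).sub (Lpoly x)
  -- expansion of the moment integral
  have expand : ∀ x : ℝ, 0 ≤ x →
      (∫ u in (0:ℝ)..R, u ^ (d - 1) * K u * F (x * u))
      = τ₁ * mK (d + 1) * x + τ₂ * mK (d + 2) * x ^ 2 + τ₃ * mK (d + 3) * x ^ 3 + G x := by
    intro x hx
    have split : (fun u : ℝ => u ^ (d - 1) * K u * F (x * u))
        = fun u => u ^ (d - 1) * K u * (τ₁ * (x * u) + τ₂ * (x * u) ^ 2 + τ₃ * (x * u) ^ 3)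
          + u ^ (d - 1) * K u * (F (x * u) - (τ₁ * (x * u) + τ₂ * (x * u) ^ 2 + τ₃ * (x * u) ^ 3)) := by
      funext u; ring
    rw [split, intervalIntegral.integral_add (Lpoly x) (Lrem x hx)]
    have hpoly : (∫ u in (0:ℝ)..R, u ^ (d - 1) * K u *
        (τ₁ * (x * u) + τ₂ * (x * u) ^ 2 + τ₃ * (x * u) ^ 3))
        = τ₁ * mK (d + 1) * x + τ₂ * mK (d + 2) * x ^ 2 + τ₃ * mK (d + 3) * x ^ 3 := by
      have : (fun u : ℝ => u ^ (d - 1) * K u * (τ₁ * (x * u) + τ₂ * (x * u) ^ 2 + τ₃ * (x * u) ^ 3))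
          = fun u => (τ₁ * x) * (u ^ (d + 1 - 1) * K u) + ((τ₂ * x ^ 2) * (u ^ (d + 2 - 1) * K u)
            + (τ₃ * x ^ 3) * (u ^ (d + 3 - 1) * K u)) := by
        funext u; exact hι x u
      rw [this, intervalIntegral.integral_add ((L1 _).const_mul _)
        (((L1 _).const_mul _).add ((L1 _).const_mul _)),
        intervalIntegral.integral_add ((L1 _).const_mul _) ((L1 _).const_mul _),
        intervalIntegral.integral_const_mul, intervalIntegral.integral_const_mul,
        intervalIntegral.integral_const_mul, ← hmK, ← hmK, ← hmK]
      ring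
    rw [hpoly, hGdef]
  -- G is little-o of h³ on the closed right neighborhood
  have smallG : G =o[𝓝[Set.Ici (0:ℝ)] 0] (fun h => h ^ 3) := by
    rw [Asymptotics.isLittleO_iff]
    intro c hc
    set ε : ℝ := c / (mK (d + 3) + 1) with hεdef
    have hm3 : 0 ≤ mK (d + 3) := hmom_nonneg _
    have hε : 0 < ε := by positivity
    have hev := Asymptotics.isLittleO_iff.mp smallE hε
    rw [Filter.eventually_iff, Metric.mem_nhdsWithin_iff] at hev
    obtain ⟨δ, hδ, hball⟩ := hev
    rw [Filter.eventually_iff, Metric.mem_nhdsWithin_iff]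
    refine ⟨δ / (R + 1), by positivity, ?_⟩
    rintro h ⟨hhb, hhmem⟩
    have h0 : (0:ℝ) ≤ h := hhmem
    have hlt : h < δ / (R + 1) := by
      have := mem_ball_iff_norm.mp hhb
      rwa [sub_zero, Real.norm_eq_abs, abs_of_nonneg h0] at this
    -- pointwise bound
    have hpt : ∀ u ∈ Set.Icc (0:ℝ) R,
        ‖u ^ (d - 1) * K u * (F (h * u) - (τ₁ * (h * u) + τ₂ * (h * u) ^ 2 + τ₃ * (h * u) ^ 3))‖
        ≤ (ε * h ^ 3) * (u ^ (d + 3 - 1) * K u) := by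
      intro u hu
      have h0u : (0:ℝ) ≤ u := hu.1
      have hEt : ‖E (h * u)‖ ≤ ε * ‖(h * u) ^ 3‖ := by
        apply hball
        constructor
        · rw [Metric.mem_ball, Real.dist_eq, sub_zero, abs_of_nonneg (mul_nonneg h0 h0u)]
          calc h * u ≤ h * (R + 1) := by
                apply mul_le_mul_of_nonneg_left _ h0
                linarith [hu.2]
            _ < δ / (R + 1) * (R + 1) := by
                apply mul_lt_mul_of_pos_right hlt; linarith
            _ = δ := by field_simp
        · exact mul_nonneg h0 h0u
      rw [Real.norm_eq_abs, abs_mul, abs_of_nonneg (mul_nonneg (pow_nonneg h0u _) (hKnonneg u))]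
      have : |F (h * u) - (τ₁ * (h * u) + τ₂ * (h * u) ^ 2 + τ₃ * (h * u) ^ 3)| ≤ ε * (h * u) ^ 3 := by
        have := hEt
        rw [hEdef] at this
        simp only [Real.norm_eq_abs] at this
        calc |F (h * u) - (τ₁ * (h * u) + τ₂ * (h * u) ^ 2 + τ₃ * (h * u) ^ 3)| ≤ ε * |(h * u) ^ 3| := this
          _ = ε * (h * u) ^ 3 := by rw [abs_of_nonneg (pow_nonneg (mul_nonneg h0 h0u) 3)]
      calc u ^ (d - 1) * K u * |F (h * u) - (τ₁ * (h * u) + τ₂ * (h * u) ^ 2 + τ₃ * (h * u) ^ 3)|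
          ≤ u ^ (d - 1) * K u * (ε * (h * u) ^ 3) := by
            apply mul_le_mul_of_nonneg_left this (mul_nonneg (pow_nonneg h0u _) (hKnonneg u))
        _ = (ε * h ^ 3) * (u ^ (d + 3 - 1) * K u) := by
            have h3 : d + 3 - 1 = (d - 1) + 3 := by omega
            rw [h3, pow_add]; ring
    -- integral bound
    have hGb : ‖G h‖ ≤ (ε * h ^ 3) * mK (d + 3) := by
      rw [hGdef]
      calc ‖∫ u in (0:ℝ)..R, u ^ (d - 1) * K u *
              (F (h * u) - (τ₁ * (h * u) + τ₂ * (h * u) ^ 2 + τ₃ * (h * u) ^ 3))‖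
          ≤ ∫ u in (0:ℝ)..R, ‖u ^ (d - 1) * K u *
              (F (h * u) - (τ₁ * (h * u) + τ₂ * (h * u) ^ 2 + τ₃ * (h * u) ^ 3))‖ :=
            intervalIntegral.norm_integral_le_integral_norm hRR
        _ ≤ ∫ u in (0:ℝ)..R, (ε * h ^ 3) * (u ^ (d + 3 - 1) * K u) := by
            apply intervalIntegral.integral_mono_on hRR ((Lrem h h0).norm)
              ((L1 _).const_mul _) hpt
        _ = (ε * h ^ 3) * mK (d + 3) := by
            rw [intervalIntegral.integral_const_mul, ← hmK]
    calc ‖G h‖ ≤ (ε * h ^ 3) * mK (d + 3) := hGb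
      _ ≤ c * h ^ 3 := by
          have : ε * mK (d + 3) ≤ c := by
            rw [hεdef]
            rw [div_mul_eq_mul_div, div_le_iff₀ (by positivity)]
            nlinarith
          nlinarith [pow_nonneg h0 3]
      _ ≤ c * ‖h ^ 3‖ := by
          apply mul_le_mul_of_nonneg_left _ hc.le
          exact le_abs_self _
  -- the consistency-principle step
  have hB4 : 0 ≤ B 4 := by
    rw [hB]
    exact div_nonneg (hmom_nonneg _) hmKd.le
  set a : ℝ := (B 4) ^ ((1:ℝ)/4) with ha
  have ha0 : 0 ≤ a := Real.rpow_nonneg hB4 _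
  have hb : (B 4) ^ ((3:ℝ)/4) = a ^ 3 := by
    rw [ha, ← Real.rpow_natCast ((B 4) ^ ((1:ℝ)/4)) 3, ← Real.rpow_mul hB4]
    norm_num
  -- the six little-o pieces
  have g1 := scaleo G smallG 1 zero_le_one
  simp only [one_mul] at g1
  have g2 := scaleo G smallG (Real.sqrt 2) (Real.sqrt_nonneg 2)
  have g3 := scaleo G smallG 2 (by norm_num)
  have e1 := scaleo E smallE a ha0
  have e2 := scaleo E smallE (Real.sqrt 2 * a) (mul_nonneg (Real.sqrt_nonneg 2) ha0)
  have e3 := scaleo E smallE (2 * a) (by positivity)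
  have hsum : (fun h => c2 / mK d * G h - c3 / mK d * G (Real.sqrt 2 * h) - c1 / mK d * G (2 * h)
      - c2 * E (a * h) + c3 * E (Real.sqrt 2 * a * h) + c1 * E (2 * a * h))
      =o[𝓝[>] (0:ℝ)] (fun h => h ^ 3) := by
    have t1 := (g1.const_mul_left (c2 / mK d)).sub (g2.const_mul_left (c3 / mK d))
    have t2 := t1.sub (g3.const_mul_left (c1 / mK d))
    have t3 := t2.sub (e1.const_mul_left c2)
    have t4 := t3.add (e2.const_mul_left c3)
    exact t4.add (e3.const_mul_left c1)
  refine hsum.congr' ?_ EventuallyEq.rfl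
  filter_upwards [self_mem_nhdsWithin] with h hh
  have h0 : (0:ℝ) ≤ h := le_of_lt hh
  have hs2nn : (0:ℝ) ≤ Real.sqrt 2 := Real.sqrt_nonneg 2
  have hs2 : Real.sqrt 2 ^ 2 = 2 := Real.sq_sqrt (by norm_num)
  have hexp1 := expand h h0
  have hexp2 := expand (Real.sqrt 2 * h) (mul_nonneg hs2nn h0)
  have hexp3 := expand (2 * h) (by positivity)
  have hassoc1 : Real.sqrt 2 * (a * h) = Real.sqrt 2 * a * h := (mul_assoc _ _ _).symm
  have hassoc2 : 2 * (a * h) = 2 * a * h := (mul_assoc _ _ _).symm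
  rw [hΨ, hφ₂, hIF, hIF, hIF, hexp1, hexp2, hexp3, hassoc1, hassoc2,
    hFpoly (a * h), hFpoly (Real.sqrt 2 * a * h), hFpoly (2 * a * h),
    hB 1, hB 3, hb]
  rw [hc4, hc5, hc1, hc2, hc3]
  linear_combination ((4*(d:ℝ)*((d:ℝ)-1)) * (τ₂ * h^2 * (mK (d+2)/mK d - a^2))
    + (4*(d:ℝ)*((d:ℝ)-1)) * Real.sqrt 2 * (τ₃ * h^3 * (mK (d+3)/mK d - a^3))) * hs2
end
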